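/- arXiv:1904.03946 — 5 statements merged into one kernel-verified Lean document; each statement's English description precedes it below -/
import Mathlib

section
/- Let p₁,…,p_ℓ ∈ [1,∞), α₁,…,α_ℓ ≥ 0, let μ be a probability measure on a measurable space Ω and let f : Ω → [0,∞) be μ-measurable. Then min_{1≤i≤ℓ} α_i ( (1/ℓ) ∫_Ω f dμ )^{p_i} ≤ ∫_Ω min_{1≤i≤ℓ} α_i f^{p_i} dμ. -/
open MeasureTheory ENNReal

/-- Jensen's inequality for `rpow` and `lintegral` on a probability measure. -/
lemma jensen_rpow {Ω : Type*} [MeasurableSpace Ω] (μ : Measure Ω) [IsProbabilityMeasure μ]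
    (f : Ω → ℝ≥0∞) (hf : Measurable f) {p : ℝ} (hp : 1 ≤ p) :
    (∫⁻ x, f x ∂μ) ^ p ≤ ∫⁻ x, f x ^ p ∂μ := by
  rcases eq_or_lt_of_le hp with h | h
  · simp [← h]
  · have hpq : p.HolderConjugate (Real.conjExponent p) := Real.HolderConjugate.conjExponent h
    have H := ENNReal.lintegral_mul_le_Lp_mul_Lq μ hpq hf.aemeasurable
      (aemeasurable_const (b := (1 : ℝ≥0∞)))
    simp only [Pi.mul_apply, mul_one, ENNReal.one_rpow, lintegral_one, measure_univ,
      ENNReal.rpow_one] at H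
    have hp0 : p ≠ 0 := by positivity
    calc (∫⁻ x, f x ∂μ) ^ p ≤ ((∫⁻ x, f x ^ p ∂μ) ^ (1 / p)) ^ p :=
          ENNReal.rpow_le_rpow H (by positivity)
      _ = ∫⁻ x, f x ^ p ∂μ := by
          rw [one_div, ENNReal.rpow_inv_rpow hp0]

theorem stmt_2 {Ω : Type*} [MeasurableSpace Ω] (ℓ : ℕ) (hℓ : 1 ≤ ℓ)
    (p : Fin ℓ → ℝ) (hp : ∀ i, 1 ≤ p i) (α : Fin ℓ → ℝ≥0∞)
    (μ : Measure Ω) [IsProbabilityMeasure μ]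
    (f : Ω → ℝ≥0∞) (hf : Measurable f) :
    ⨅ i, α i * ((∫⁻ x, f x ∂μ) / ℓ) ^ p i ≤ ∫⁻ x, ⨅ i, α i * f x ^ p i ∂μ := by
  have hne : Nonempty (Fin ℓ) := ⟨⟨0, hℓ⟩⟩
  set m := ∫⁻ x, f x ∂μ with hm
  -- trivial case: some α i = 0
  by_cases hα : ∃ i, α i = 0
  · obtain ⟨i, hi⟩ := hα
    refine le_trans (iInf_le _ i) ?_
    simp [hi]
  push_neg at hα
  -- trivial case: m = 0
  by_cases hm0 : m = 0
  · refine le_trans (iInf_le _ (Classical.arbitrary (Fin ℓ))) ?_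
    rw [hm0, ENNReal.zero_div, ENNReal.zero_rpow_of_pos (by linarith [hp (Classical.arbitrary (Fin ℓ))]), mul_zero]
    exact zero_le
  -- case m = ∞ : RHS is infinite
  by_cases hmtop : m = ∞
  · have hS : MeasurableSet {x | 1 ≤ f x} := hf measurableSet_Ici
    obtain ⟨i₀, hi₀⟩ := Finite.exists_min α
    have hc : (0 : ℝ≥0∞) < ⨅ i, α i := by
      have : ⨅ i, α i = α i₀ := le_antisymm (iInf_le _ _) (le_iInf hi₀)
      rw [this]
      exact pos_iff_ne_zero.2 (hα i₀)
    have h1 : ∫⁻ x in {x | 1 ≤ f x}, f x ∂μ = ∞ := by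
      by_contra h
      have h2 : ∫⁻ x in {x | 1 ≤ f x}ᶜ, f x ∂μ ≤ 1 := by
        calc ∫⁻ x in {x | 1 ≤ f x}ᶜ, f x ∂μ ≤ ∫⁻ _ in {x | 1 ≤ f x}ᶜ, 1 ∂μ := by
              refine setLIntegral_mono measurable_const fun x hx => ?_
              simp only [Set.mem_compl_iff, Set.mem_setOf_eq, not_le] at hx
              exact hx.le
          _ = μ {x | 1 ≤ f x}ᶜ := by simp
          _ ≤ 1 := prob_le_one
      have := lintegral_add_compl f hS (μ := μ)
      rw [← hm] at this
      rw [hmtop] at this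
      exact (ENNReal.add_ne_top.2 ⟨h, (h2.trans_lt one_lt_top).ne⟩) this
    have key : ∫⁻ x in {x | 1 ≤ f x}, (⨅ i, α i) * f x ∂μ ≤ ∫⁻ x, ⨅ i, α i * f x ^ p i ∂μ := by
      refine le_trans (setLIntegral_mono (by fun_prop) fun x hx => ?_) (setLIntegral_le_lintegral _ _)
      refine le_iInf fun i => mul_le_mul (iInf_le _ _) ?_ zero_le zero_le
      calc f x = f x ^ (1 : ℝ) := (ENNReal.rpow_one _).symm
        _ ≤ f x ^ p i := ENNReal.rpow_le_rpow_of_exponent_le hx (hp i)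
    rw [lintegral_const_mul _ hf, h1, ENNReal.mul_top hc.ne'] at key
    exact le_top.trans key
  -- main case : 0 < m < ∞
  have hℓ0 : (ℓ : ℝ≥0∞) ≠ 0 := by exact_mod_cast Nat.pos_of_ne_zero (by omega) |>.ne'
  have hℓtop : (ℓ : ℝ≥0∞) ≠ ∞ := natCast_ne_top ℓ
  set t := m / ℓ with ht
  have ht0 : t ≠ 0 := by
    simp only [ht, ne_eq, ENNReal.div_eq_zero_iff, hm0, hℓtop, or_self, not_false_eq_true]
  have httop : t ≠ ∞ := (ENNReal.div_lt_top hmtop hℓ0).ne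
  have htm : (ℓ : ℝ≥0∞) * t = m := by
    rw [ht, ENNReal.mul_div_cancel hℓ0 hℓtop]
  rcases eq_or_lt_of_le hℓ with hone | htwo
  · -- ℓ = 1 : Jensen
    have ht1 : t = m := by
      rw [ht, ← hone]; simp
    refine le_trans (iInf_le _ (Classical.arbitrary (Fin ℓ))) ?_
    set i := Classical.arbitrary (Fin ℓ)
    have h1 : ∀ x, α i * f x ^ p i = ⨅ j : Fin ℓ, α j * f x ^ p j := by
      intro x
      have : ∀ j : Fin ℓ, j = i := by
        intro j; apply Fin.ext; have hj := j.isLt; have hi2 := i.isLt; omega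
      exact le_antisymm (le_iInf fun j => (this j) ▸ le_refl _) (iInf_le _ i)
    calc α i * t ^ p i = α i * m ^ p i := by rw [ht1]
      _ ≤ α i * ∫⁻ x, f x ^ p i ∂μ :=
          mul_le_mul_right (jensen_rpow μ f hf (hp i)) _
      _ = ∫⁻ x, α i * f x ^ p i ∂μ := (lintegral_const_mul _ (hf.pow_const _)).symm
      _ = ∫⁻ x, ⨅ j, α j * f x ^ p j ∂μ := by simp_rw [h1]
  · -- ℓ ≥ 2 : Markov-type argument
    set S := {x | t ≤ f x} with hSdef
    have hS : MeasurableSet S := hf measurableSet_Ici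
    set I := ⨅ i, α i * t ^ p i with hI
    -- pointwise bound on S
    have hpt : ∀ x ∈ S, I * (f x / t) ≤ ⨅ i, α i * f x ^ p i := by
      intro x hx
      have hxt : t ≤ f x := hx
      refine le_iInf fun i => ?_
      rcases eq_or_ne (f x) ∞ with hfx | hfx
      · rw [hfx, ENNReal.rpow_eq_top_iff.2 (Or.inr ⟨rfl, by linarith [hp i]⟩),
          ENNReal.mul_top (hα i)]
        exact le_top
      have hfx0 : f x ≠ 0 := fun h => ht0 (le_antisymm (h ▸ hxt) zero_le)
      calc I * (f x / t) ≤ (α i * t ^ p i) * (f x / t) :=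
            mul_le_mul_left (iInf_le _ i) _
        _ = α i * (t ^ (p i - 1) * f x) := by
            have h3 : t ^ p i * t ^ (-1 : ℝ) = t ^ (p i - 1) := by
              rw [← ENNReal.rpow_add _ _ ht0 httop, sub_eq_add_neg]
            rw [div_eq_mul_inv, ← ENNReal.rpow_neg_one t, ← h3]; ring
        _ ≤ α i * (f x ^ (p i - 1) * f x) :=
            mul_le_mul_right
              (mul_le_mul_left (ENNReal.rpow_le_rpow hxt (by linarith [hp i])) _) _
        _ = α i * (f x ^ (p i - 1) * f x ^ (1 : ℝ)) := by rw [ENNReal.rpow_one]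
        _ = α i * f x ^ p i := by
            rw [← ENNReal.rpow_add _ _ hfx0 hfx, sub_add_cancel]
    -- the integral over S of f is at least m - t
    have hMarkov : m - t ≤ ∫⁻ x in S, f x ∂μ := by
      rw [tsub_le_iff_right]
      have h2 : ∫⁻ x in Sᶜ, f x ∂μ ≤ t := by
        calc ∫⁻ x in Sᶜ, f x ∂μ ≤ ∫⁻ _ in Sᶜ, t ∂μ := by
              refine setLIntegral_mono measurable_const fun x hx => ?_
              simp only [hSdef, Set.mem_compl_iff, Set.mem_setOf_eq, not_le] at hx
              exact hx.le
          _ = t * μ Sᶜ := by rw [setLIntegral_const]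
          _ ≤ t * 1 := mul_le_mul_right prob_le_one _
          _ = t := mul_one t
      calc m = ∫⁻ x in S, f x ∂μ + ∫⁻ x in Sᶜ, f x ∂μ := (lintegral_add_compl f hS).symm
        _ ≤ ∫⁻ x in S, f x ∂μ + t := add_le_add le_rfl h2
    -- conclude
    have htle : t + t ≤ m := by
      calc t + t = 2 * t := (two_mul t).symm
        _ ≤ (ℓ : ℝ≥0∞) * t := by
            gcongr
            exact_mod_cast htwo
        _ = m := htm
    have hfinal : I ≤ I * (t⁻¹ * (m - t)) := by
      refine le_mul_of_one_le_right zero_le ?_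
      rw [← ENNReal.div_eq_inv_mul]
      rw [ENNReal.le_div_iff_mul_le (Or.inl ht0) (Or.inl httop), one_mul]
      exact ENNReal.le_sub_of_add_le_left httop htle
    calc I ≤ I * (t⁻¹ * (m - t)) := hfinal
      _ ≤ I * (t⁻¹ * ∫⁻ x in S, f x ∂μ) := mul_le_mul_right (mul_le_mul_right hMarkov _) _
      _ = ∫⁻ x in S, I * (f x / t) ∂μ := by
          rw [← mul_assoc, ← lintegral_const_mul _ hf]
          refine lintegral_congr fun x => by rw [div_eq_mul_inv]; ring
      _ ≤ ∫⁻ x in S, ⨅ i, α i * f x ^ p i ∂μ :=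
          setLIntegral_mono (by fun_prop) hpt
      _ ≤ ∫⁻ x, ⨅ i, α i * f x ^ p i ∂μ := setLIntegral_le_lintegral _ _
end

section
/- Let ψ : ℝⁿ → ℝ^{n+1} be a reconstruction kernel and U ∈ C¹(ℝⁿ × (0,∞)). For every 0 < τ < T and every x ∈ ℝⁿ, τ^{-n} ∫_{ℝⁿ} ψ_t((x−y)/τ) U(y,τ) dy = T^{-n} ∫_{ℝⁿ} ψ_t((x−y)/T) U(y,T) dy − ∬_{ℝⁿ×[τ,T]} ψ((x−y)/t) · ∇U(y,t) t^{-n} dt dy. -/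
open MeasureTheory Metric Set

namespace Stmt10Aux

variable {n : ℕ}

noncomputable def sig1 (n : ℕ) : (Fin (n+1) → ℝ) →L[ℝ] EuclideanSpace ℝ (Fin n) :=
  (EuclideanSpace.equiv (Fin n) ℝ).symm.toContinuousLinearMap.comp
    (ContinuousLinearMap.pi fun j => ContinuousLinearMap.proj j.succ)

@[simp] lemma sig1_apply (p : Fin (n+1) → ℝ) (j : Fin n) : sig1 n p j = p j.succ := rfl

noncomputable def sig (n : ℕ) : (Fin (n+1) → ℝ) →L[ℝ] (EuclideanSpace ℝ (Fin n)) × ℝ :=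
  (sig1 n).prod (ContinuousLinearMap.proj 0)

@[simp] lemma sig_apply (p : Fin (n+1) → ℝ) : sig n p = (sig1 n p, p 0) := rfl

noncomputable def Cm (n : ℕ) (i : Fin (n+1)) : (EuclideanSpace ℝ (Fin n) × ℝ) →L[ℝ] ℝ :=
  Fin.cases (ContinuousLinearMap.snd ℝ _ ℝ)
    (fun j => (EuclideanSpace.proj j).comp (ContinuousLinearMap.fst ℝ _ ℝ)) i

@[simp] lemma Cm_zero (v : EuclideanSpace ℝ (Fin n) × ℝ) : Cm n 0 v = v.2 := by
  simp [Cm]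

@[simp] lemma Cm_succ (j : Fin n) (v : EuclideanSpace ℝ (Fin n) × ℝ) : Cm n j.succ v = v.1 j := by
  simp [Cm]

variable (ψ : EuclideanSpace ℝ (Fin n) → EuclideanSpace ℝ (Fin n) × ℝ)
  (U : EuclideanSpace ℝ (Fin n) × ℝ → ℝ) (x : EuclideanSpace ℝ (Fin n))

noncomputable def zf (x : EuclideanSpace ℝ (Fin n)) (p : Fin (n+1) → ℝ) :
    EuclideanSpace ℝ (Fin n) := (p 0)⁻¹ • (x - sig1 n p)

noncomputable def fv (i : Fin (n+1)) (p : Fin (n+1) → ℝ) : ℝ :=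
  (U (sig n p) * ((p 0)^n)⁻¹) * Cm n i (ψ (zf x p))

noncomputable def zd (x : EuclideanSpace ℝ (Fin n)) (p : Fin (n+1) → ℝ) :
    (Fin (n+1) → ℝ) →L[ℝ] EuclideanSpace ℝ (Fin n) :=
  (p 0)⁻¹ • (0 - sig1 n) +
    ContinuousLinearMap.smulRight ((-((p 0)^2)⁻¹) • ContinuousLinearMap.proj 0) (x - sig1 n p)

noncomputable def Fd (i : Fin (n+1)) (p : Fin (n+1) → ℝ) : (Fin (n+1) → ℝ) →L[ℝ] ℝ :=
  (U (sig n p) * ((p 0)^n)⁻¹) • ((Cm n i).comp ((fderiv ℝ ψ (zf x p)).comp (zd x p)))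
  + (Cm n i (ψ (zf x p))) •
      (U (sig n p) • ((-((n:ℝ) * (p 0)^(n-1)) / ((p 0)^n)^2) • ContinuousLinearMap.proj 0)
        + ((p 0)^n)⁻¹ • ((fderiv ℝ U (sig n p)).comp (sig n)))

lemma key_deriv (hψC1 : ContDiff ℝ 1 ψ)
    (hU : ContDiffOn ℝ 1 U (Set.univ ×ˢ Set.Ioi (0:ℝ)))
    (p : Fin (n+1) → ℝ) (hp : 0 < p 0) (i : Fin (n+1)) :
    HasFDerivAt (fv ψ U x i) (Fd ψ U x i p) p := by
  have hopen : IsOpen ((Set.univ : Set (EuclideanSpace ℝ (Fin n))) ×ˢ Set.Ioi (0:ℝ)) :=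
    isOpen_univ.prod isOpen_Ioi
  have hmem : sig n p ∈ (Set.univ : Set (EuclideanSpace ℝ (Fin n))) ×ˢ Set.Ioi (0:ℝ) :=
    ⟨Set.mem_univ _, hp⟩
  have hUd : DifferentiableAt ℝ U (sig n p) :=
    (hU.differentiableOn one_ne_zero).differentiableAt (hopen.mem_nhds hmem)
  have hU1 : HasFDerivAt (fun q => U (sig n q)) ((fderiv ℝ U (sig n p)).comp (sig n)) p :=
    hUd.hasFDerivAt.comp p (sig n).hasFDerivAt
  have hg : HasFDerivAt (fun q : Fin (n+1) → ℝ => ((q 0)^n)⁻¹)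
      ((-((n:ℝ) * (p 0)^(n-1)) / ((p 0)^n)^2) • ContinuousLinearMap.proj (R := ℝ)
        (φ := fun _ : Fin (n+1) => ℝ) 0) p := by
    have h1 : HasDerivAt (fun s : ℝ => (s^n)⁻¹) (-((n:ℝ)*(p 0)^(n-1)) / ((p 0)^n)^2) (p 0) :=
      (hasDerivAt_pow n (p 0)).inv (pow_ne_zero _ hp.ne')
    have hproj := (ContinuousLinearMap.proj (R := ℝ) (φ := fun _ : Fin (n+1) => ℝ)
      0).hasFDerivAt (x := p)
    have := h1.comp_hasFDerivAt p hproj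
    exact this
  have hA := hU1.mul hg
  have hc : HasFDerivAt (fun q : Fin (n+1) → ℝ => (q 0)⁻¹)
      ((-((p 0)^2)⁻¹) • ContinuousLinearMap.proj (R := ℝ) (φ := fun _ : Fin (n+1) => ℝ) 0) p :=
    (hasDerivAt_inv hp.ne').comp_hasFDerivAt p
      ((ContinuousLinearMap.proj (R := ℝ) (φ := fun _ : Fin (n+1) => ℝ)
        0).hasFDerivAt (x := p))
  have hv : HasFDerivAt (fun q => x - sig1 n q) (0 - sig1 n) p :=
    (hasFDerivAt_const x p).sub (sig1 n).hasFDerivAt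
  have hz : HasFDerivAt (zf x) (zd x p) p := hc.smul hv
  have hψd : HasFDerivAt ψ (fderiv ℝ ψ (zf x p)) (zf x p) :=
    (hψC1.differentiable one_ne_zero (zf x p)).hasFDerivAt
  have hB : HasFDerivAt (fun q => Cm n i (ψ (zf x q)))
      ((Cm n i).comp ((fderiv ℝ ψ (zf x p)).comp (zd x p))) p :=
    (Cm n i).hasFDerivAt.comp p (hψd.comp p hz)
  exact hA.mul hB

lemma sig1_single_zero : sig1 n (Pi.single 0 1) = 0 := by
  ext j
  simp [Pi.single_eq_of_ne (Fin.succ_ne_zero j)]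

lemma sig1_single_succ (j : Fin n) :
    sig1 n (Pi.single j.succ 1) = EuclideanSpace.single j 1 := by
  ext k
  simp [EuclideanSpace.single_apply, Pi.single_apply, Fin.succ_inj]

lemma esum (w : EuclideanSpace ℝ (Fin n)) :
    ∑ j, w j • EuclideanSpace.single j (1:ℝ) = w := by
  ext i
  rw [WithLp.ofLp_sum, Finset.sum_apply]
  simp [EuclideanSpace.single_apply]

lemma clm_repr (L : (EuclideanSpace ℝ (Fin n) × ℝ) →L[ℝ] ℝ)
    (v : EuclideanSpace ℝ (Fin n) × ℝ) :
    v.2 * L (0, 1) + ∑ j, v.1 j * L (EuclideanSpace.single j 1, 0) = L v := by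
  have hv : (∑ j, v.1 j • ((EuclideanSpace.single j (1:ℝ)), (0:ℝ)))
      + v.2 • ((0,1) : EuclideanSpace ℝ (Fin n) × ℝ) = v := by
    apply Prod.ext
    · simp only [Prod.fst_add, Prod.fst_sum, Prod.smul_mk, Prod.smul_fst]
      simpa using esum v.1
    · simp [Prod.snd_sum]
  conv_rhs => rw [← hv]
  rw [map_add, map_sum]
  simp only [_root_.map_smul, smul_eq_mul]
  ring

lemma fderiv_psi_snd (hψC1 : ContDiff ℝ 1 ψ) (w v : EuclideanSpace ℝ (Fin n)) :
    fderiv ℝ (fun y => (ψ y).2) w v = (fderiv ℝ ψ w v).2 := by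
  have h := ((ContinuousLinearMap.snd ℝ (EuclideanSpace ℝ (Fin n)) ℝ).hasFDerivAt.comp w
    (hψC1.differentiable one_ne_zero w).hasFDerivAt).fderiv
  have h2 : (fun y => (ψ y).2)
      = (⇑(ContinuousLinearMap.snd ℝ (EuclideanSpace ℝ (Fin n)) ℝ) ∘ ψ) := rfl
  rw [h2, h]
  rfl

lemma fderiv_psi_fst (hψC1 : ContDiff ℝ 1 ψ) (j : Fin n) (w v : EuclideanSpace ℝ (Fin n)) :
    fderiv ℝ (fun y => (ψ y).1 j) w v = (fderiv ℝ ψ w v).1 j := by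
  have h := (((EuclideanSpace.proj (𝕜 := ℝ) j).comp
    (ContinuousLinearMap.fst ℝ (EuclideanSpace ℝ (Fin n)) ℝ)).hasFDerivAt.comp w
    (hψC1.differentiable one_ne_zero w).hasFDerivAt).fderiv
  have h2 : (fun y => (ψ y).1 j)
      = (⇑((EuclideanSpace.proj (𝕜 := ℝ) j).comp
        (ContinuousLinearMap.fst ℝ (EuclideanSpace ℝ (Fin n)) ℝ)) ∘ ψ) := rfl
  rw [h2, h]
  rfl

lemma div_sum (hψC1 : ContDiff ℝ 1 ψ)
    (hψdiv : ∀ w : EuclideanSpace ℝ (Fin n),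
      (∑ i : Fin n, fderiv ℝ (fun y => (ψ y).1 i) w (EuclideanSpace.single i 1))
        + fderiv ℝ (fun y => (ψ y).2) w w + (n : ℝ) * (ψ w).2 = 0)
    (hn : 1 ≤ n) (p : Fin (n+1) → ℝ) (hp : 0 < p 0) :
    ∑ i, Fd ψ U x i p (Pi.single i 1)
      = fderiv ℝ U (sig n p) (ψ (zf x p)) * ((p 0)^n)⁻¹ := by
  have ht : p 0 ≠ 0 := hp.ne'
  set t := p 0 with htdef
  set w := zf x p with hwdef
  set P := fderiv ℝ ψ w with hPdef
  set L := fderiv ℝ U (sig n p) with hLdef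
  have hzd0 : zd x p (Pi.single 0 1) = (-(t)⁻¹) • w := by
    simp only [zd, ContinuousLinearMap.add_apply, ContinuousLinearMap.smul_apply,
      ContinuousLinearMap.sub_apply, ContinuousLinearMap.zero_apply,
      ContinuousLinearMap.smulRight_apply, ContinuousLinearMap.proj_apply,
      ContinuousLinearMap.neg_apply,
      Pi.single_eq_same, sig1_single_zero, smul_eq_mul, mul_one, sub_zero, zero_sub, smul_neg,
      smul_zero, neg_zero, zero_add]
    rw [hwdef]
    simp only [zf]
    rw [smul_smul]
    congr 1
    rw [sq]
    field_simp
    rw [htdef, sq, div_mul_eq_div_div, div_self (show p 0 ≠ 0 from ht)]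
  have hzdsucc : ∀ j : Fin n, zd x p (Pi.single j.succ 1)
      = (-(t)⁻¹) • EuclideanSpace.single j 1 := by
    intro j
    simp only [zd, ContinuousLinearMap.add_apply, ContinuousLinearMap.smul_apply,
      ContinuousLinearMap.sub_apply, ContinuousLinearMap.zero_apply,
      ContinuousLinearMap.smulRight_apply, ContinuousLinearMap.proj_apply,
      ContinuousLinearMap.neg_apply,
      sig1_single_succ, Pi.single_eq_of_ne (Fin.succ_ne_zero j).symm, smul_eq_mul, mul_zero,
      zero_smul, add_zero, zero_sub, smul_neg, neg_smul]
    rw [htdef]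
  have hsig0 : sig n (Pi.single 0 1) = ((0 : EuclideanSpace ℝ (Fin n)), (1:ℝ)) := by
    rw [sig_apply, sig1_single_zero, Pi.single_eq_same]
  have hsigsucc : ∀ j : Fin n, sig n (Pi.single j.succ 1)
      = (EuclideanSpace.single j 1, (0:ℝ)) := by
    intro j
    rw [sig_apply, sig1_single_succ, Pi.single_eq_of_ne (Fin.succ_ne_zero j).symm]
  have h0 : Fd ψ U x 0 p (Pi.single 0 1)
      = (U (sig n p) * (t^n)⁻¹) * (-(t)⁻¹ * (P w).2)
        + (ψ w).2 * (U (sig n p) * (-((n:ℝ) * t^(n-1)) / (t^n)^2) + (t^n)⁻¹ * L (0,1)) := by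
    simp only [Fd, ContinuousLinearMap.add_apply, ContinuousLinearMap.smul_apply,
      ContinuousLinearMap.comp_apply, hzd0, _root_.map_smul, Cm_zero, smul_eq_mul,
      ContinuousLinearMap.proj_apply, Pi.single_eq_same, hsig0, ← hPdef, ← hLdef, ← hwdef,
      Prod.smul_snd, mul_one]
    rw [htdef]
  have hsucc : ∀ j : Fin n, Fd ψ U x j.succ p (Pi.single j.succ 1)
      = (U (sig n p) * (t^n)⁻¹) * (-(t)⁻¹ * (P (EuclideanSpace.single j 1)).1 j)
        + (ψ w).1 j * ((t^n)⁻¹ * L (EuclideanSpace.single j 1, 0)) := by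
    intro j
    simp only [Fd, ContinuousLinearMap.add_apply, ContinuousLinearMap.smul_apply,
      ContinuousLinearMap.comp_apply, hzdsucc j, _root_.map_smul, Cm_succ, smul_eq_mul,
      ContinuousLinearMap.proj_apply, Pi.single_eq_of_ne (Fin.succ_ne_zero j).symm,
      hsigsucc j, ← hPdef, ← hLdef, ← hwdef, Prod.smul_fst, mul_zero, PiLp.smul_apply]
    ring
  rw [Fin.sum_univ_succ, h0, Finset.sum_congr rfl (fun j _ => hsucc j)]
  have hsum : (∑ j : Fin n, ((U (sig n p) * (t^n)⁻¹) * (-(t)⁻¹ * (P (EuclideanSpace.single j 1)).1 j)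
        + (ψ w).1 j * ((t^n)⁻¹ * L (EuclideanSpace.single j 1, 0))))
      = (U (sig n p) * (t^n)⁻¹) * (-(t)⁻¹)
          * (∑ j : Fin n, (P (EuclideanSpace.single j 1)).1 j)
        + (t^n)⁻¹ * (∑ j : Fin n, (ψ w).1 j * L (EuclideanSpace.single j 1, 0)) := by
    rw [Finset.sum_add_distrib, Finset.mul_sum, Finset.mul_sum]
    congr 1
    · exact Finset.sum_congr rfl fun j _ => by ring
    · exact Finset.sum_congr rfl fun j _ => by ring
  rw [hsum]
  have hdiv := hψdiv w
  have hrw : ∀ j : Fin n, fderiv ℝ (fun y => (ψ y).1 j) w (EuclideanSpace.single j 1)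
      = (P (EuclideanSpace.single j 1)).1 j := fun j => fderiv_psi_fst ψ hψC1 j w _
  rw [Finset.sum_congr rfl (fun j _ => hrw j), fderiv_psi_snd ψ hψC1 w w, ← hPdef] at hdiv
  have hS1 : (∑ j : Fin n, (P (EuclideanSpace.single j 1)).1 j)
      = -(P w).2 - (n:ℝ) * (ψ w).2 := by linarith
  have hrepr := clm_repr L (ψ w)
  have hS2 : (∑ j : Fin n, (ψ w).1 j * L (EuclideanSpace.single j 1, 0))
      = L (ψ w) - (ψ w).2 * L (0,1) := by linarith
  rw [hS1, hS2]
  have hpow : t^(n-1) * t = t^n := by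
    rw [← pow_succ, Nat.sub_add_cancel hn]
  rw [show (t:ℝ)^n = t^(n-1)*t from hpow.symm]
  field_simp
  ring

lemma cons_eta (p : Fin (n+1) → ℝ) : Fin.cons (p 0) (fun j => p j.succ) = p := by
  funext k
  refine Fin.cases ?_ ?_ k
  · rw [Fin.cons_zero]
  · intro j; rw [Fin.cons_succ]

lemma psi_zero (hψsupp : tsupport ψ ⊆ Metric.ball 0 1) {w : EuclideanSpace ℝ (Fin n)}
    (hw : 1 ≤ ‖w‖) : ψ w = 0 := by
  apply image_eq_zero_of_notMem_tsupport
  intro hmem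
  have h := hψsupp hmem
  rw [Metric.mem_ball, dist_zero_right] at h
  linarith

lemma coord_le (v : EuclideanSpace ℝ (Fin n)) (j : Fin n) : |v j| ≤ ‖v‖ := by
  rw [EuclideanSpace.norm_eq, ← Real.sqrt_sq_eq_abs]
  apply Real.sqrt_le_sqrt
  have h := Finset.single_le_sum (f := fun i => ‖v i‖^2) (fun i _ => sq_nonneg _)
    (Finset.mem_univ j)
  simpa [Real.norm_eq_abs, sq_abs] using h

lemma psi_far (hψsupp : tsupport ψ ⊆ Metric.ball 0 1) {t : ℝ} (ht : 0 < t)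
    {y : EuclideanSpace ℝ (Fin n)} {j : Fin n} (h : t ≤ |x j - y j|) :
    ψ (t⁻¹ • (x - y)) = 0 := by
  apply psi_zero ψ hψsupp
  have h1 : |(t⁻¹ • (x - y)) j| = t⁻¹ * |x j - y j| := by
    have : (t⁻¹ • (x - y)) j = t⁻¹ * (x j - y j) := rfl
    rw [this, abs_mul, abs_of_pos (inv_pos.2 ht)]
  have h2 := coord_le (t⁻¹ • (x - y)) j
  have h3 : (1:ℝ) ≤ t⁻¹ * |x j - y j| := by
    rw [← inv_mul_cancel₀ ht.ne']
    gcongr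
  calc (1:ℝ) ≤ t⁻¹ * |x j - y j| := h3
  _ = |(t⁻¹ • (x - y)) j| := h1.symm
  _ ≤ ‖t⁻¹ • (x - y)‖ := h2

lemma cont_zf : ContinuousOn (zf (n := n) x) {p : Fin (n+1) → ℝ | 0 < p 0} := by
  show ContinuousOn (fun p : Fin (n+1) → ℝ => (p 0)⁻¹ • (x - sig1 n p)) _
  exact (((continuous_apply 0).continuousOn).inv₀ fun p hp => ne_of_gt hp).smul
    (continuous_const.sub (sig1 n).continuous).continuousOn

lemma cont_base (hψC1 : ContDiff ℝ 1 ψ)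
    (hU : ContDiffOn ℝ 1 U (Set.univ ×ˢ Set.Ioi (0:ℝ))) :
    ContinuousOn (fun p : Fin (n+1) → ℝ => fderiv ℝ U (sig n p) (ψ (zf x p)) * ((p 0)^n)⁻¹)
      {p : Fin (n+1) → ℝ | 0 < p 0} := by
  have hopen : IsOpen ((Set.univ : Set (EuclideanSpace ℝ (Fin n))) ×ˢ Set.Ioi (0:ℝ)) :=
    isOpen_univ.prod isOpen_Ioi
  have hU' : ContinuousOn (fderiv ℝ U) (Set.univ ×ˢ Set.Ioi (0:ℝ)) :=
    hU.continuousOn_fderiv_of_isOpen hopen le_rfl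
  have h1 : ContinuousOn (fun p : Fin (n+1) → ℝ => fderiv ℝ U (sig n p))
      {p : Fin (n+1) → ℝ | 0 < p 0} :=
    hU'.comp (sig n).continuous.continuousOn (fun p hp => ⟨Set.mem_univ _, hp⟩)
  have h2 : ContinuousOn (fun p : Fin (n+1) → ℝ => ψ (zf x p))
      {p : Fin (n+1) → ℝ | 0 < p 0} :=
    hψC1.continuous.comp_continuousOn (cont_zf x)
  exact (h1.clm_apply h2).mul ((((continuous_apply 0).pow n).continuousOn).inv₀
    fun p hp => pow_ne_zero _ (ne_of_gt hp))

lemma cont_fv (hψC1 : ContDiff ℝ 1 ψ)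
    (hU : ContDiffOn ℝ 1 U (Set.univ ×ˢ Set.Ioi (0:ℝ))) (i : Fin (n+1)) :
    ContinuousOn (fv ψ U x i) {p : Fin (n+1) → ℝ | 0 < p 0} := by
  have hUc : ContinuousOn U (Set.univ ×ˢ Set.Ioi (0:ℝ)) := hU.continuousOn
  have h1 : ContinuousOn (fun p : Fin (n+1) → ℝ => U (sig n p))
      {p : Fin (n+1) → ℝ | 0 < p 0} :=
    hUc.comp (sig n).continuous.continuousOn (fun p hp => ⟨Set.mem_univ _, hp⟩)
  have h2 : ContinuousOn (fun p : Fin (n+1) → ℝ => Cm n i (ψ (zf x p)))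
      {p : Fin (n+1) → ℝ | 0 < p 0} :=
    ((Cm n i).continuous.comp hψC1.continuous).comp_continuousOn (cont_zf x)
  exact (h1.mul ((((continuous_apply 0).pow n).continuousOn).inv₀
    fun p hp => pow_ne_zero _ (ne_of_gt hp))).mul h2

end Stmt10Aux

open Stmt10Aux

theorem stmt_10 (n : ℕ) (hn : 1 ≤ n)
    (ψ : EuclideanSpace ℝ (Fin n) → EuclideanSpace ℝ (Fin n) × ℝ)
    (hψC1 : ContDiff ℝ 1 ψ) (hψsupp : tsupport ψ ⊆ Metric.ball 0 1)
    (hψint : (∫ x, (ψ x).2) = 1)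
    (hψdiv : ∀ x : EuclideanSpace ℝ (Fin n),
      (∑ i : Fin n,
          fderiv ℝ (fun y => (ψ y).1 i) x (EuclideanSpace.single i 1))
        + fderiv ℝ (fun y => (ψ y).2) x x + (n : ℝ) * (ψ x).2 = 0)
    (U : EuclideanSpace ℝ (Fin n) × ℝ → ℝ)
    (hU : ContDiffOn ℝ 1 U (Set.univ ×ˢ Set.Ioi (0:ℝ)))
    (τ T : ℝ) (hτ : 0 < τ) (hτT : τ < T) (x : EuclideanSpace ℝ (Fin n)) :
    (1 / τ ^ n) * ∫ y, (ψ (τ⁻¹ • (x - y))).2 * U (y, τ)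
      = (1 / T ^ n) * (∫ y, (ψ (T⁻¹ • (x - y))).2 * U (y, T))
        - ∫ y, ∫ t in Set.Icc τ T,
            fderiv ℝ U (y, t) (ψ (t⁻¹ • (x - y))) / t ^ n := by
  classical
  haveI : NeZero n := ⟨by omega⟩
  have hT : 0 < T := hτ.trans hτT
  set R : ℝ := T + 1 with hRdef
  have hTR : T < R := by rw [hRdef]; linarith
  have hR : 0 < R := by linarith
  set a : Fin (n+1) → ℝ := Fin.cons τ (fun j => x j - R) with hadef
  set b : Fin (n+1) → ℝ := Fin.cons T (fun j => x j + R) with hbdef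
  have ha0 : a 0 = τ := by rw [hadef, Fin.cons_zero]
  have hb0 : b 0 = T := by rw [hbdef, Fin.cons_zero]
  have haj : ∀ j : Fin n, a j.succ = x j - R := fun j => by rw [hadef, Fin.cons_succ]
  have hbj : ∀ j : Fin n, b j.succ = x j + R := fun j => by rw [hbdef, Fin.cons_succ]
  have hab : a ≤ b := by
    intro i
    refine Fin.cases ?_ ?_ i
    · rw [ha0, hb0]; exact le_of_lt hτT
    · intro j; rw [haj, hbj]; linarith
  have hIccpos : ∀ p ∈ Set.Icc a b, 0 < p 0 := fun p hp =>
    lt_of_lt_of_le hτ (ha0 ▸ hp.1 0)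
  have hIccsub : Set.Icc a b ⊆ {p : Fin (n+1) → ℝ | 0 < p 0} := fun p hp => hIccpos p hp
  -- divergence theorem
  have Hc : ∀ i, ContinuousOn (fv ψ U x i) (Set.Icc a b) := fun i =>
    (cont_fv ψ U x hψC1 hU i).mono hIccsub
  have Hd : ∀ p ∈ (Set.pi Set.univ fun i => Set.Ioo (a i) (b i)) \ (∅ : Set (Fin (n+1) → ℝ)),
      ∀ i, HasFDerivAt (fv ψ U x i) (Fd ψ U x i p) p := by
    intro p hp i
    have h0 : τ < p 0 := ha0 ▸ (hp.1 0 (Set.mem_univ 0)).1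
    exact key_deriv ψ U x hψC1 hU p (lt_trans hτ h0) i
  set Dfun : (Fin (n+1) → ℝ) → ℝ :=
    fun p => fderiv ℝ U (sig n p) (ψ (zf x p)) * ((p 0)^n)⁻¹ with hDdef
  have HiD : IntegrableOn Dfun (Set.Icc a b) :=
    ((cont_base ψ U x hψC1 hU).mono hIccsub).integrableOn_compact isCompact_Icc
  have hEqOn : Set.EqOn Dfun (fun p => ∑ i, Fd ψ U x i p (Pi.single i 1)) (Set.Icc a b) :=
    fun p hp => (div_sum ψ U x hψC1 hψdiv hn p (hIccpos p hp)).symm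
  have Hi : IntegrableOn (fun p => ∑ i, Fd ψ U x i p (Pi.single i 1)) (Set.Icc a b) :=
    HiD.congr_fun hEqOn measurableSet_Icc
  have divthm := integral_divergence_of_hasFDerivAt_off_countable' a b hab
    (fv ψ U x) (fun i p => Fd ψ U x i p) ∅ Set.countable_empty Hc Hd Hi
  have hbox : (∫ p in Set.Icc a b, ∑ i, Fd ψ U x i p (Pi.single i 1))
      = ∫ p in Set.Icc a b, Dfun p :=
    (setIntegral_congr_fun measurableSet_Icc hEqOn).symm
  -- spatial faces vanish
  have hfacegen : ∀ (j : Fin n) (c : ℝ), R ≤ |x j - c| →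
      (∫ w in Set.Icc (a ∘ (j.succ).succAbove) (b ∘ (j.succ).succAbove),
        fv ψ U x j.succ ((j.succ).insertNth c w)) = 0 := by
    intro j c hc
    rw [setIntegral_congr_fun (g := fun _ => (0:ℝ)) measurableSet_Icc ?_, integral_zero]
    intro w hw
    set p : Fin (n+1) → ℝ := (j.succ).insertNth c w with hpdef
    have h00 : (j.succ).succAbove 0 = 0 :=
      Fin.succAbove_ne_zero_zero (Fin.succ_ne_zero j)
    have hp00 : p 0 = w 0 := by
      rw [hpdef, ← h00, Fin.insertNth_apply_succAbove]
    have h0a : a 0 ≤ p 0 := by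
      rw [hp00]; simpa [h00] using hw.1 0
    have h0b : p 0 ≤ b 0 := by
      rw [hp00]; simpa [h00] using hw.2 0
    have hp0 : 0 < p 0 := lt_of_lt_of_le hτ (ha0 ▸ h0a)
    have hψ0 : ψ (zf x p) = 0 := by
      have hle : p 0 ≤ |x j - sig1 n p j| := by
        rw [sig1_apply, hpdef, Fin.insertNth_apply_same]
        calc p 0 ≤ T := hb0 ▸ h0b
        _ ≤ R := le_of_lt hTR
        _ ≤ |x j - c| := hc
      exact psi_far ψ x hψsupp hp0 (y := sig1 n p) (j := j) hle
    show fv ψ U x j.succ p = 0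
    simp only [fv, hψ0, Cm_succ]
    show _ * (0 : EuclideanSpace ℝ (Fin n) × ℝ).1 j = 0
    simp
  -- face at index 0
  have hface0 : ∀ s : ℝ, 0 < s → s < R →
      (∫ w in Set.Icc (a ∘ (0:Fin (n+1)).succAbove) (b ∘ (0:Fin (n+1)).succAbove),
        fv ψ U x 0 ((0:Fin (n+1)).insertNth s w))
      = (1/s^n) * ∫ y, (ψ (s⁻¹ • (x - y))).2 * U (y, s) := by
    intro s hs hsR
    have hlo : (a ∘ (0:Fin (n+1)).succAbove) = fun j : Fin n => x j - R := by
      funext j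
      rw [Function.comp_apply, Fin.succAbove_zero, haj]
    have hhi : (b ∘ (0:Fin (n+1)).succAbove) = fun j : Fin n => x j + R := by
      funext j
      rw [Function.comp_apply, Fin.succAbove_zero, hbj]
    rw [hlo, hhi]
    have hout : ∀ w : Fin n → ℝ,
        w ∉ Set.Icc (fun j : Fin n => x j - R) (fun j : Fin n => x j + R) →
        fv ψ U x 0 ((0:Fin (n+1)).insertNth s w) = 0 := by
      intro w hw
      have hex : ∃ j, R ≤ |x j - w j| := by
        by_contra hcon
        push_neg at hcon
        exact hw ⟨fun j => by have := abs_lt.1 (hcon j); show x j - R ≤ w j; linarith,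
          fun j => by have := abs_lt.1 (hcon j); show w j ≤ x j + R; linarith⟩
      obtain ⟨j, hj⟩ := hex
      set p : Fin (n+1) → ℝ := (0:Fin (n+1)).insertNth s w with hpdef
      have hcons : p = Fin.cons s w := by rw [hpdef, Fin.insertNth_zero']
      have hp0 : p 0 = s := by rw [hcons, Fin.cons_zero]
      have hψ0 : ψ (zf x p) = 0 := by
        have h1 : sig1 n p j = w j := by
          rw [sig1_apply, hcons, Fin.cons_succ]
        have hle : p 0 ≤ |x j - sig1 n p j| := by
          rw [h1, hp0]
          exact le_trans (le_of_lt hsR) hj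
        exact psi_far ψ x hψsupp (by rw [hp0]; exact hs) (y := sig1 n p) (j := j) hle
      show fv ψ U x 0 p = 0
      simp only [fv, hψ0, Cm_zero]
      show _ * (0 : EuclideanSpace ℝ (Fin n) × ℝ).2 = 0
      simp
    rw [setIntegral_eq_integral_of_forall_compl_eq_zero hout]
    have vp2 := EuclideanSpace.volume_preserving_symm_measurableEquiv_toLp (Fin n)
    have step4 := vp2.integral_comp ((MeasurableEquiv.toLp 2 (Fin n → ℝ)).symm).measurableEmbedding
      (fun w => fv ψ U x 0 ((0:Fin (n+1)).insertNth s w))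
    rw [← step4, ← MeasureTheory.integral_const_mul]
    refine integral_congr_ae (Filter.Eventually.of_forall fun y => ?_)
    set p : Fin (n+1) → ℝ :=
      (0:Fin (n+1)).insertNth s ((MeasurableEquiv.toLp 2 (Fin n → ℝ)).symm y) with hpdef
    have hcons : p = Fin.cons s ((MeasurableEquiv.toLp 2 (Fin n → ℝ)).symm y) := by
      rw [hpdef, Fin.insertNth_zero']
    have hp0 : p 0 = s := by rw [hcons, Fin.cons_zero]
    have hsig1y : sig1 n p = y := by
      ext j
      rw [sig1_apply, hcons, Fin.cons_succ]
      rfl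
    show fv ψ U x 0 p = 1 / s ^ n * ((ψ (s⁻¹ • (x - y))).2 * U (y, s))
    have hsg : sig n p = (y, s) := by rw [sig_apply, hsig1y, hp0]
    have hz : zf x p = s⁻¹ • (x - y) := by
      show (p 0)⁻¹ • (x - sig1 n p) = _
      rw [hsig1y, hp0]
    rw [fv, hsg, hz, Cm_zero, hp0, one_div]
    ring
  -- transform the box integral of the divergence
  have hlhs : (∫ p in Set.Icc a b, Dfun p)
      = ∫ y, ∫ t in Set.Icc τ T, fderiv ℝ U (y, t) (ψ (t⁻¹ • (x - y))) / t ^ n := by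
    set e1 := MeasurableEquiv.piFinSuccAbove (fun _ : Fin (n+1) => ℝ) 0 with he1
    have vp1 := MeasureTheory.volume_preserving_piFinSuccAbove (fun _ : Fin (n+1) => ℝ) 0
    set lo : Fin n → ℝ := fun j => x j - R with hlodef
    set hi : Fin n → ℝ := fun j => x j + R with hhidef
    have hloj : ∀ j, lo j = x j - R := fun j => rfl
    have hhij : ∀ j, hi j = x j + R := fun j => rfl
    set G : ℝ × (Fin n → ℝ) → ℝ := fun q => Dfun (Fin.cons q.1 q.2) with hGdef
    have he1app : ∀ p : Fin (n+1) → ℝ, e1 p = (p 0, fun j => p j.succ) := fun p => rfl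
    have hpre : ⇑e1 ⁻¹' (Set.Icc τ T ×ˢ Set.Icc lo hi) = Set.Icc a b := by
      ext p
      simp only [Set.mem_preimage, he1app, Set.mem_prod, Set.mem_Icc, Pi.le_def]
      constructor
      · rintro ⟨⟨h1, h2⟩, ⟨h3, h4⟩⟩
        constructor
        · intro k
          refine Fin.cases ?_ ?_ k
          · rw [ha0]; exact h1
          · intro j; rw [haj]; exact (hloj j) ▸ h3 j
        · intro k
          refine Fin.cases ?_ ?_ k
          · rw [hb0]; exact h2
          · intro j; rw [hbj]; exact (hhij j) ▸ h4 j
      · rintro ⟨h1, h2⟩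
        refine ⟨⟨ha0 ▸ h1 0, hb0 ▸ h2 0⟩, fun j => ?_, fun j => ?_⟩
        · rw [hloj j, ← haj j]; exact h1 j.succ
        · rw [hhij j, ← hbj j]; exact h2 j.succ
    have step1 : (∫ p in Set.Icc a b, Dfun p)
        = ∫ q in Set.Icc τ T ×ˢ Set.Icc lo hi, G q := by
      rw [← vp1.setIntegral_preimage_emb e1.measurableEmbedding G
        (Set.Icc τ T ×ˢ Set.Icc lo hi), hpre]
      refine setIntegral_congr_fun measurableSet_Icc fun p _ => ?_
      show Dfun p = G (e1 p)
      rw [hGdef, he1app p]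
      show Dfun p = Dfun (Fin.cons (p 0) (fun j => p j.succ))
      rw [cons_eta]
    have hrestrict : (volume : Measure (ℝ × (Fin n → ℝ))).restrict
          (Set.Icc τ T ×ˢ Set.Icc lo hi)
        = ((volume : Measure ℝ).restrict (Set.Icc τ T)).prod
          ((volume : Measure (Fin n → ℝ)).restrict (Set.Icc lo hi)) := by
      rw [Measure.prod_restrict, ← Measure.volume_eq_prod]
    have hcons : Continuous (fun q : ℝ × (Fin n → ℝ) => (Fin.cons q.1 q.2 : Fin (n+1) → ℝ)) := by
      apply continuous_pi
      intro k
      refine Fin.cases ?_ ?_ k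
      · simp only [Fin.cons_zero]
        exact continuous_fst
      · intro j
        simp only [Fin.cons_succ]
        exact (continuous_apply j).comp continuous_snd
    have hGcont : ContinuousOn G (Set.Icc τ T ×ˢ Set.Icc lo hi) := by
      have hmaps : Set.MapsTo (fun q : ℝ × (Fin n → ℝ) => (Fin.cons q.1 q.2 : Fin (n+1) → ℝ))
          (Set.Icc τ T ×ˢ Set.Icc lo hi) {p : Fin (n+1) → ℝ | 0 < p 0} := by
        intro q hq
        show 0 < (Fin.cons q.1 q.2 : Fin (n+1) → ℝ) 0
        rw [Fin.cons_zero]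
        exact lt_of_lt_of_le hτ hq.1.1
      exact (cont_base ψ U x hψC1 hU).comp hcons.continuousOn hmaps
    have hGint : IntegrableOn G (Set.Icc τ T ×ˢ Set.Icc lo hi) :=
      hGcont.integrableOn_compact (isCompact_Icc.prod isCompact_Icc)
    have hint2 : Integrable G (((volume : Measure ℝ).restrict (Set.Icc τ T)).prod
        ((volume : Measure (Fin n → ℝ)).restrict (Set.Icc lo hi))) := by
      rw [← hrestrict]
      exact hGint
    have step2 : (∫ q in Set.Icc τ T ×ˢ Set.Icc lo hi, G q)
        = ∫ w in Set.Icc lo hi, ∫ t in Set.Icc τ T, G (t, w) := by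
      rw [hrestrict]
      exact integral_prod_symm G hint2
    have step3 : (∫ w in Set.Icc lo hi, ∫ t in Set.Icc τ T, G (t, w))
        = ∫ w, ∫ t in Set.Icc τ T, G (t, w) := by
      apply setIntegral_eq_integral_of_forall_compl_eq_zero
      intro w hw
      have hex : ∃ j, R ≤ |x j - w j| := by
        by_contra hcon
        push_neg at hcon
        exact hw ⟨fun j => by have := abs_lt.1 (hcon j); rw [hloj]; linarith,
          fun j => by have := abs_lt.1 (hcon j); rw [hhij]; linarith⟩
      obtain ⟨j, hj⟩ := hex
      have hzero : ∀ t ∈ Set.Icc τ T, G (t, w) = (fun _ => (0:ℝ)) t := by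
        intro t ht
        have hp0 : (Fin.cons t w : Fin (n+1) → ℝ) 0 = t := rfl
        have hψ0 : ψ (zf x (Fin.cons t w : Fin (n+1) → ℝ)) = 0 := by
          have h1 : sig1 n (Fin.cons t w : Fin (n+1) → ℝ) j = w j := by
            rw [sig1_apply, Fin.cons_succ]
          have hle : (Fin.cons t w : Fin (n+1) → ℝ) 0
              ≤ |x j - sig1 n (Fin.cons t w : Fin (n+1) → ℝ) j| := by
            rw [h1, hp0]
            exact le_trans ht.2 (le_trans (le_of_lt hTR) hj)
          exact psi_far ψ x hψsupp
            (by rw [hp0]; exact lt_of_lt_of_le hτ ht.1) hle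
        show Dfun (Fin.cons t w) = (0:ℝ)
        rw [hDdef]
        simp [hψ0]
      rw [setIntegral_congr_fun measurableSet_Icc hzero]
      simp
    have vp2 := EuclideanSpace.volume_preserving_symm_measurableEquiv_toLp (Fin n)
    have step4 := vp2.integral_comp ((MeasurableEquiv.toLp 2 (Fin n → ℝ)).symm).measurableEmbedding
      (fun w => ∫ t in Set.Icc τ T, G (t, w))
    rw [step1, step2, step3, ← step4]
    refine integral_congr_ae (Filter.Eventually.of_forall fun y => ?_)
    refine setIntegral_congr_fun measurableSet_Icc fun t ht => ?_
    have h0t : 0 < t := lt_of_lt_of_le hτ ht.1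
    have hp0 : (Fin.cons t ((MeasurableEquiv.toLp 2 (Fin n → ℝ)).symm y) : Fin (n+1) → ℝ) 0 = t :=
      rfl
    have hsig1y : sig1 n (Fin.cons t ((MeasurableEquiv.toLp 2 (Fin n → ℝ)).symm y)
        : Fin (n+1) → ℝ) = y := by
      ext j
      rw [sig1_apply, Fin.cons_succ]
      rfl
    show Dfun (Fin.cons t ((MeasurableEquiv.toLp 2 (Fin n → ℝ)).symm y))
        = fderiv ℝ U (y, t) (ψ (t⁻¹ • (x - y))) / t ^ n
    have hsg : sig n (Fin.cons t ((MeasurableEquiv.toLp 2 (Fin n → ℝ)).symm y)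
        : Fin (n+1) → ℝ) = (y, t) := by
      rw [sig_apply, hsig1y, hp0]
    have hz : zf x (Fin.cons t ((MeasurableEquiv.toLp 2 (Fin n → ℝ)).symm y)
        : Fin (n+1) → ℝ) = t⁻¹ • (x - y) := by
      show ((Fin.cons t ((MeasurableEquiv.toLp 2 (Fin n → ℝ)).symm y) : Fin (n+1) → ℝ) 0)⁻¹
          • (x - sig1 n (Fin.cons t ((MeasurableEquiv.toLp 2 (Fin n → ℝ)).symm y))) = _
      rw [hsig1y, hp0]
    rw [hDdef]
    simp only []
    rw [hsg, hz, hp0, div_eq_mul_inv]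
  -- spatial faces vanish in the sum
  have hsum0 : (∑ j : Fin n,
      ((∫ w in Set.Icc (a ∘ (j.succ).succAbove) (b ∘ (j.succ).succAbove),
        fv ψ U x j.succ ((j.succ).insertNth (b j.succ) w))
      - ∫ w in Set.Icc (a ∘ (j.succ).succAbove) (b ∘ (j.succ).succAbove),
        fv ψ U x j.succ ((j.succ).insertNth (a j.succ) w))) = 0 := by
    refine Finset.sum_eq_zero fun j _ => ?_
    rw [hfacegen j (b j.succ) (by
        rw [hbj]
        have h : x j - (x j + R) = -R := by ring
        rw [h, abs_neg, abs_of_pos hR]),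
      hfacegen j (a j.succ) (by
        rw [haj]
        have h : x j - (x j - R) = R := by ring
        rw [h, abs_of_pos hR]),
      sub_self]
  rw [hbox, Fin.sum_univ_succ] at divthm
  rw [ha0, hb0] at divthm
  rw [hface0 T hT hTR, hface0 τ hτ (lt_trans hτT hTR), hsum0] at divthm
  rw [hlhs] at divthm
  linarith
end

section
/- Let Ω be a bounded measurable subset of ℝⁿ, ℓ ≥ 1, s₁,…,s_ℓ ∈ (0,1), p₁,…,p_ℓ ∈ [1,∞). There exists C such that for every measurable u : Ω → ℝ, ∬_{Ω×Ω} |u(x)−u(y)| dx dy ≤ C (1 + ∬_{Ω×Ω} min_{1≤i≤ℓ} |u(x)−u(y)|^{p_i}/|x−y|^{n+s_i p_i} dx dy). -/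
/-! Write `t = |u x - u y|`, `r = ‖x - y‖` and `eᵢ = n + sᵢ pᵢ`. On a bounded set
`r ≤ D := max (diam Ω) 1` and `0 ≤ eᵢ ≤ E := n + ∑ⱼ pⱼ`. If `t ≤ 1` then `t ≤ D ^ E`; otherwise
`t ≤ t ^ pᵢ = (t ^ pᵢ / r ^ eᵢ) · r ^ eᵢ ≤ D ^ E · t ^ pᵢ / r ^ eᵢ`. Hence
`t ≤ D ^ E (1 + min_i t ^ pᵢ / r ^ eᵢ)` pointwise, and integrating over `Ω × Ω`, which has finite
measure, gives the theorem. -/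

open MeasureTheory Metric Set

theorem le_rpow_mul_one_add_rpow_div_rpow {t r D p e E : ℝ} (ht : 0 ≤ t) (hr : 0 < r)
    (hrD : r ≤ D) (hD : 1 ≤ D) (hp : 1 ≤ p) (he : 0 ≤ e) (heE : e ≤ E) :
    t ≤ D ^ E * (1 + t ^ p / r ^ e) := by
  have hDE : 1 ≤ D ^ E := Real.one_le_rpow hD (he.trans heE)
  have hq : 0 ≤ t ^ p / r ^ e := by positivity
  rcases le_or_gt t 1 with ht1 | ht1
  · nlinarith
  have hre : r ^ e ≤ D ^ E :=
    (Real.rpow_le_rpow hr.le hrD he).trans (Real.rpow_le_rpow_of_exponent_le hD heE)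
  calc t ≤ t ^ p := Real.self_le_rpow_of_one_le ht1.le hp
    _ = t ^ p / r ^ e * r ^ e := (div_mul_cancel₀ _ (Real.rpow_pos_of_pos hr e).ne').symm
    _ ≤ t ^ p / r ^ e * D ^ E := mul_le_mul_of_nonneg_left hre hq
    _ ≤ D ^ E * (1 + t ^ p / r ^ e) := by nlinarith

theorem ENNReal.ofReal_le_ofReal_mul_one_add {a b c : ℝ} (hb : 0 ≤ b) (hc : 0 ≤ c)
    (h : a ≤ c * (1 + b)) :
    ENNReal.ofReal a ≤ ENNReal.ofReal c * (1 + ENNReal.ofReal b) := by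
  calc ENNReal.ofReal a ≤ ENNReal.ofReal (c * (1 + b)) := ENNReal.ofReal_le_ofReal h
    _ = ENNReal.ofReal c * (1 + ENNReal.ofReal b) := by
      rw [ENNReal.ofReal_mul hc, ENNReal.ofReal_add zero_le_one hb, ENNReal.ofReal_one]

theorem ENNReal.le_mul_one_add_iInf {ι : Sort*} {a c : ENNReal} {f : ι → ENNReal}
    (hc₀ : c ≠ 0) (hc : c ≠ ⊤) (h : ∀ i, a ≤ c * (1 + f i)) :
    a ≤ c * (1 + ⨅ i, f i) := by
  rw [ENNReal.add_iInf, ENNReal.mul_iInf_of_ne hc₀ hc]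
  exact le_iInf h

theorem setLIntegral_setLIntegral_le_mul_one_add {α : Type*} [MeasurableSpace α]
    {μ : Measure α} {s : Set α} (hs : MeasurableSet s) {f g : α → α → ENNReal} {c : ENNReal}
    (hc : c ≠ ⊤) (h : ∀ x ∈ s, ∀ y ∈ s, f x y ≤ c * (1 + g x y)) :
    ∫⁻ x in s, ∫⁻ y in s, f x y ∂μ ∂μ
      ≤ c * (μ s * μ s + 1) * (1 + ∫⁻ x in s, ∫⁻ y in s, g x y ∂μ ∂μ) := by
  set I := ∫⁻ x in s, ∫⁻ y in s, g x y ∂μ ∂μ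
  calc ∫⁻ x in s, ∫⁻ y in s, f x y ∂μ ∂μ
      ≤ ∫⁻ x in s, ∫⁻ y in s, c * (1 + g x y) ∂μ ∂μ :=
        setLIntegral_mono' hs fun x hx => setLIntegral_mono' hs fun y hy => h x hx y hy
    _ = c * (μ s * μ s + I) := by
        simp only [lintegral_const_mul' _ _ hc, lintegral_add_left measurable_const,
          setLIntegral_one, setLIntegral_const, I]
    _ ≤ c * (μ s * μ s + 1) * (1 + I) := by
        rw [mul_assoc]
        gcongr
        calc μ s * μ s + I ≤ μ s * μ s + (μ s * μ s * I + 1 + I) := by gcongr; exact le_add_self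
          _ = (μ s * μ s + 1) * (1 + I) := by ring

theorem stmt_15_general (n ℓ : ℕ)
    (s p : Fin ℓ → ℝ) (hs : ∀ i, s i ∈ Set.Ioo (0:ℝ) 1) (hp : ∀ i, 1 ≤ p i)
    (Ω : Set (EuclideanSpace ℝ (Fin n))) (hΩ : MeasurableSet Ω)
    (hΩb : Bornology.IsBounded Ω) :
    ∃ C : ℝ, 0 < C ∧
      ∀ u : EuclideanSpace ℝ (Fin n) → ℝ, Measurable u →
        ∫⁻ x in Ω, ∫⁻ y in Ω, ENNReal.ofReal |u x - u y|
          ≤ ENNReal.ofReal C *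
            (1 + ∫⁻ x in Ω, ∫⁻ y in Ω,
              ⨅ i, ENNReal.ofReal
                (|u x - u y| ^ p i / ‖x - y‖ ^ ((n : ℝ) + s i * p i))) := by
  set D := max (diam Ω) 1
  set E := (n : ℝ) + ∑ i, p i
  have hp₀ : ∀ i, 0 ≤ p i := fun i => zero_le_one.trans (hp i)
  set c := ENNReal.ofReal (D ^ E)
  have hc₀ : c ≠ 0 := by
    simpa [c] using Real.rpow_pos_of_pos (zero_lt_one.trans_le (le_max_right _ 1)) E
  have hC : c * (volume Ω * volume Ω + 1) ≠ ⊤ := by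
    have := hΩb.measure_lt_top (μ := volume).ne
    finiteness
  refine ⟨(c * (volume Ω * volume Ω + 1)).toReal,
    ENNReal.toReal_pos (mul_ne_zero hc₀ (by simp)) hC, fun u _ => ?_⟩
  rw [ENNReal.ofReal_toReal hC]
  refine setLIntegral_setLIntegral_le_mul_one_add hΩ ENNReal.ofReal_ne_top fun x hx y hy => ?_
  refine ENNReal.le_mul_one_add_iInf hc₀ ENNReal.ofReal_ne_top fun i => ?_
  obtain rfl | hxy := eq_or_ne x y
  · simp
  obtain ⟨hs₀, hs₁⟩ := hs i
  refine ENNReal.ofReal_le_ofReal_mul_one_add (by positivity) (by positivity)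
    (le_rpow_mul_one_add_rpow_div_rpow (abs_nonneg _) (norm_sub_pos_iff.mpr hxy)
      ((dist_le_diam_of_mem hΩb hx hy).trans (le_max_left _ _)) (le_max_right _ _) (hp i)
      (by positivity [hp₀ i]) ?_)
  calc (n : ℝ) + s i * p i ≤ n + p i := by gcongr; nlinarith [hp₀ i]
    _ ≤ E := add_le_add_right (Finset.single_le_sum (fun j _ => hp₀ j) (Finset.mem_univ i)) _

theorem stmt_15 (n ℓ : ℕ) (hn : 1 ≤ n) (hℓ : 1 ≤ ℓ)
    (s p : Fin ℓ → ℝ) (hs : ∀ i, s i ∈ Set.Ioo (0:ℝ) 1) (hp : ∀ i, 1 ≤ p i)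
    (Ω : Set (EuclideanSpace ℝ (Fin n))) (hΩ : MeasurableSet Ω)
    (hΩb : Bornology.IsBounded Ω) :
    ∃ C : ℝ, 0 < C ∧
      ∀ u : EuclideanSpace ℝ (Fin n) → ℝ, Measurable u →
        ∫⁻ x in Ω, ∫⁻ y in Ω, ENNReal.ofReal |u x - u y|
          ≤ ENNReal.ofReal C *
            (1 + ∫⁻ x in Ω, ∫⁻ y in Ω,
              ⨅ i, ENNReal.ofReal
                (|u x - u y| ^ p i / ‖x - y‖ ^ ((n : ℝ) + s i * p i))) :=
  stmt_15_general n ℓ s p hs hp Ω hΩ hΩb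
end

section
/- Under the hypothesis n > s_i p_i for all i and ∬_{ℝⁿ×ℝⁿ} min_i |u(x)−u(y)|^{p_i}/|x−y|^{n+s_i p_i} dx dy < ∞, with α = min_i (n/p_i − s_i) > 0, there exists a constant C such that for every R ≥ 1, R^α ⨍_{B(0,2R)} ⨍_{B(0,R)} |u(x)−u(y)| dx dy ≤ C. -/
open MeasureTheory Metric Set
open scoped ENNReal

lemma aux_rpow_le (t lam : ℝ≥0∞) (hl0 : lam ≠ 0) (hlt : lam ≠ ⊤) {q : ℝ} (hq : 1 ≤ q) :
    t ^ (1/q) ≤ lam ^ (1/q - 1) * t + lam ^ (1/q) := by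
  have hq0 : (0:ℝ) < q := lt_of_lt_of_le one_pos hq
  have h1q : 0 < 1/q := by positivity
  rcases eq_or_ne t ⊤ with rfl | ht
  · have h1 : lam ^ (1/q - 1) ≠ 0 := by
      simp [ENNReal.rpow_eq_zero_iff, hl0, hlt]
    rw [ENNReal.mul_top h1]
    exact le_top
  rcases le_total t lam with h | h
  · calc t ^ (1/q) ≤ lam ^ (1/q) := ENNReal.rpow_le_rpow h h1q.le
      _ ≤ _ := le_add_self
  · have ht0 : t ≠ 0 := fun h0 => hl0 (le_antisymm (h0 ▸ h) zero_le)
    have key : t ^ (1/q) = t ^ (1/q - 1) * t := by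
      nth_rewrite 1 [show (1/q : ℝ) = (1/q - 1) + 1 by ring]
      rw [ENNReal.rpow_add _ _ ht0 ht, ENNReal.rpow_one]
    rw [key]
    have hmono : t ^ (1/q - 1) ≤ lam ^ (1/q - 1) := by
      have hneg : 1/q - 1 ≤ 0 := by
        have : 1/q ≤ 1 := by
          rw [div_le_one hq0]; exact hq
        linarith
      have hl0' : 0 < lam := pos_iff_ne_zero.mpr hl0
      calc t ^ (1/q - 1) = (t ^ (-(1/q - 1)))⁻¹ := by
            rw [← ENNReal.rpow_neg, neg_neg]
        _ ≤ (lam ^ (-(1/q - 1)))⁻¹ :=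
            ENNReal.inv_le_inv.mpr (ENNReal.rpow_le_rpow h (by linarith))
        _ = lam ^ (1/q - 1) := by rw [← ENNReal.rpow_neg, neg_neg]
    exact le_add_right (mul_le_mul_left hmono t)

lemma aux_per_i (r vB I μ1 μ2 : ℝ≥0∞) (hr : 1 ≤ r) (hrt : r ≠ ⊤)
    (hvB0 : vB ≠ 0) (hvBt : vB ≠ ⊤) (R : ℝ) (hR : 1 ≤ R) (hrR : r = ENNReal.ofReal R)
    (nn a e q : ℝ) (he : 0 ≤ e)
    (hμ1 : r ^ nn * vB ≤ μ1) (hμ12 : μ1 ≤ μ2)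
    (hE1 : a + e + (-(2*nn))*(1/q - 1) ≤ 2*nn)
    (hE2 : a + e + (-(2*nn))*(1/q) ≤ 0) :
    r ^ a * (ENNReal.ofReal ((3*R) ^ e) *
      ((r ^ (-(2*nn))) ^ (1/q - 1) * I + (r ^ (-(2*nn))) ^ (1/q) * (μ2 * μ1)))
    ≤ ENNReal.ofReal (3 ^ e) * (vB⁻¹ * (vB⁻¹ * I) + 1) * (μ2 * μ1) := by
  have hr0 : r ≠ 0 := fun h => by simp [h] at hr
  have hR0 : (0:ℝ) < R := lt_of_lt_of_le one_pos hR
  have h3R : ENNReal.ofReal ((3*R) ^ e) = ENNReal.ofReal (3 ^ e) * r ^ e := by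
    rw [Real.mul_rpow (by norm_num) hR0.le, ENNReal.ofReal_mul (by positivity), hrR,
      ENNReal.ofReal_rpow_of_pos hR0]
  have hA1 : (r ^ (-(2*nn))) ^ (1/q - 1) = r ^ ((-(2*nn))*(1/q - 1)) :=
    (ENNReal.rpow_mul r _ _).symm
  have hA2 : (r ^ (-(2*nn))) ^ (1/q) = r ^ ((-(2*nn))*(1/q)) :=
    (ENNReal.rpow_mul r _ _).symm
  have expand : r ^ a * (ENNReal.ofReal ((3*R) ^ e) *
      ((r ^ (-(2*nn))) ^ (1/q - 1) * I + (r ^ (-(2*nn))) ^ (1/q) * (μ2 * μ1)))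
      = ENNReal.ofReal (3 ^ e) *
        (r ^ (a + e + (-(2*nn))*(1/q - 1)) * I + r ^ (a + e + (-(2*nn))*(1/q)) * (μ2 * μ1)) := by
    rw [h3R, hA1, hA2]
    rw [ENNReal.rpow_add _ _ hr0 hrt, ENNReal.rpow_add _ _ hr0 hrt,
      ENNReal.rpow_add _ _ hr0 hrt, ENNReal.rpow_add _ _ hr0 hrt]
    ring
  rw [expand]
  have hterm2 : r ^ (a + e + (-(2*nn))*(1/q)) * (μ2 * μ1) ≤ 1 * (μ2 * μ1) := by
    refine mul_le_mul_left ?_ _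
    calc r ^ (a + e + (-(2*nn))*(1/q)) ≤ r ^ (0:ℝ) :=
          ENNReal.rpow_le_rpow_of_exponent_le hr hE2
      _ = 1 := ENNReal.rpow_zero
  have hterm1 : r ^ (a + e + (-(2*nn))*(1/q - 1)) * I ≤ vB⁻¹ * (vB⁻¹ * I) * (μ2 * μ1) := by
    have h1 : r ^ (a + e + (-(2*nn))*(1/q - 1)) * I ≤ r ^ (2*nn) * I :=
      mul_le_mul_left (ENNReal.rpow_le_rpow_of_exponent_le hr hE1) I
    have h2 : r ^ (2*nn) * I = vB⁻¹ * (vB⁻¹ * I) * ((r ^ nn * vB) * (r ^ nn * vB)) := by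
      have : vB⁻¹ * (vB⁻¹ * I) * ((r ^ nn * vB) * (r ^ nn * vB))
          = (vB⁻¹ * vB) * ((vB⁻¹ * vB) * (I * (r ^ nn * r ^ nn))) := by ring
      rw [this, ENNReal.inv_mul_cancel hvB0 hvBt, one_mul, one_mul,
        ← ENNReal.rpow_add _ _ hr0 hrt]
      ring_nf
    calc r ^ (a + e + (-(2*nn))*(1/q - 1)) * I ≤ r ^ (2*nn) * I := h1
      _ = vB⁻¹ * (vB⁻¹ * I) * ((r ^ nn * vB) * (r ^ nn * vB)) := h2
      _ ≤ vB⁻¹ * (vB⁻¹ * I) * (μ2 * μ1) :=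
          mul_le_mul_right (mul_le_mul' (hμ1.trans hμ12) hμ1) _
  calc ENNReal.ofReal (3 ^ e) *
        (r ^ (a + e + (-(2*nn))*(1/q - 1)) * I + r ^ (a + e + (-(2*nn))*(1/q)) * (μ2 * μ1))
      ≤ ENNReal.ofReal (3 ^ e) * (vB⁻¹ * (vB⁻¹ * I) * (μ2 * μ1) + 1 * (μ2 * μ1)) := by
        gcongr
    _ = ENNReal.ofReal (3 ^ e) * (vB⁻¹ * (vB⁻¹ * I) + 1) * (μ2 * μ1) := by ring

theorem stmt_17 (n ℓ : ℕ) (hn : 1 ≤ n) (hℓ : 1 ≤ ℓ)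
    (s p : Fin ℓ → ℝ) (hs : ∀ i, s i ∈ Set.Ioo (0:ℝ) 1) (hp : ∀ i, 1 ≤ p i)
    (hnsp : ∀ i, s i * p i < n)
    (u : EuclideanSpace ℝ (Fin n) → ℝ) (hu : Measurable u)
    (hfin : ∫⁻ x, ∫⁻ y,
        ⨅ i, ENNReal.ofReal
          (|u x - u y| ^ p i / ‖x - y‖ ^ ((n : ℝ) + s i * p i)) < ⊤)
    (α : ℝ) (hα : α = ⨅ i, ((n : ℝ) / p i - s i)) :
    ∃ C : ℝ, ∀ R : ℝ, 1 ≤ R →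
      R ^ α * ⨍ x in Metric.ball (0 : EuclideanSpace ℝ (Fin n)) (2 * R),
          ⨍ y in Metric.ball (0 : EuclideanSpace ℝ (Fin n)) R, |u x - u y|
        ≤ C := by
  classical
  haveI : Nonempty (Fin ℓ) := ⟨⟨0, hℓ⟩⟩
  haveI : Nonempty (Fin n) := ⟨⟨0, hn⟩⟩
  haveI : Nontrivial (EuclideanSpace ℝ (Fin n)) := inferInstance
  set I : ℝ≥0∞ := ∫⁻ x, ∫⁻ y,
      ⨅ i, ENNReal.ofReal (|u x - u y| ^ p i / ‖x - y‖ ^ ((n : ℝ) + s i * p i))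
    with hIdef
  let F : EuclideanSpace ℝ (Fin n) → EuclideanSpace ℝ (Fin n) → ℝ≥0∞ :=
    fun x y => ⨅ i, ENNReal.ofReal (|u x - u y| ^ p i / ‖x - y‖ ^ ((n : ℝ) + s i * p i))
  have hIF : I = ∫⁻ x, ∫⁻ y, F x y := rfl
  have hp0 : ∀ i, 0 < p i := fun i => lt_of_lt_of_le one_pos (hp i)
  have hα_le : ∀ i, α ≤ (n:ℝ)/p i - s i := by
    intro i
    rw [hα]
    exact ciInf_le (Set.Finite.bddBelow (Set.finite_range _)) i
  set e : Fin ℓ → ℝ := fun i => (n:ℝ) * (1 / p i) + s i with hedef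
  have he_pos : ∀ i, 0 ≤ e i := by
    intro i
    have := (hs i).1
    have h1 : 0 ≤ (n:ℝ) * (1 / p i) :=
      mul_nonneg (Nat.cast_nonneg n) (one_div_nonneg.mpr (hp0 i).le)
    simp only [hedef]
    linarith
  -- measurability of F
  have hFmeas : Measurable (Function.uncurry F) := by
    apply Measurable.iInf
    intro i
    apply Measurable.ennreal_ofReal
    apply Measurable.div
    · exact (((hu.comp measurable_fst).sub (hu.comp measurable_snd)).abs).pow measurable_const
    · exact ((measurable_fst.sub measurable_snd).norm).pow measurable_const
  have hFx : ∀ x, Measurable (F x) := fun x => hFmeas.of_uncurry_left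
  have hDmeas : Measurable (Function.uncurry
      fun x y => ENNReal.ofReal |u (x : EuclideanSpace ℝ (Fin n)) - u y|) :=
    (((hu.comp measurable_fst).sub (hu.comp measurable_snd)).abs).ennreal_ofReal
  set vB := volume (ball (0 : EuclideanSpace ℝ (Fin n)) 1) with hvBdef
  have hvB0 : vB ≠ 0 := (measure_ball_pos _ _ one_pos).ne'
  have hvBt : vB ≠ ⊤ := measure_ball_lt_top.ne
  set K : ℝ≥0∞ := ∑ i : Fin ℓ, ENNReal.ofReal (3 ^ e i) * (vB⁻¹ * (vB⁻¹ * I) + 1) with hKdef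
  have hKt : K ≠ ⊤ := by
    rw [hKdef]
    refine (ENNReal.sum_lt_top.mpr fun i _ => ?_).ne
    refine ENNReal.mul_lt_top ENNReal.ofReal_lt_top ?_
    refine ENNReal.add_lt_top.mpr ⟨?_, ENNReal.one_lt_top⟩
    exact ENNReal.mul_lt_top (ENNReal.inv_lt_top.mpr (pos_iff_ne_zero.mpr hvB0))
      (ENNReal.mul_lt_top (ENNReal.inv_lt_top.mpr (pos_iff_ne_zero.mpr hvB0)) hfin)
  refine ⟨K.toReal, ?_⟩
  intro R hR
  have hR0 : (0:ℝ) < R := by linarith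
  set r := ENNReal.ofReal R with hrdef
  have hr1 : 1 ≤ r := ENNReal.one_le_ofReal.mpr hR
  have hr0 : r ≠ 0 := fun h => by simp [h] at hr1
  have hrt : r ≠ ⊤ := ENNReal.ofReal_ne_top
  set B1 := ball (0 : EuclideanSpace ℝ (Fin n)) R with hB1def
  set B2 := ball (0 : EuclideanSpace ℝ (Fin n)) (2*R) with hB2def
  set μ1 := volume B1 with hμ1def
  set μ2 := volume B2 with hμ2def
  have hμ10 : μ1 ≠ 0 := (measure_ball_pos _ _ hR0).ne'
  have hμ1t : μ1 ≠ ⊤ := measure_ball_lt_top.ne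
  have hμ20 : μ2 ≠ 0 := (measure_ball_pos _ _ (by linarith : (0:ℝ) < 2*R)).ne'
  have hμ2t : μ2 ≠ ⊤ := measure_ball_lt_top.ne
  have hμ12 : μ1 ≤ μ2 := measure_mono (ball_subset_ball (by linarith))
  have hμ1v : r ^ ((n:ℝ)) * vB ≤ μ1 := by
    rw [hμ1def, hB1def, Measure.addHaar_ball volume 0 hR0.le, finrank_euclideanSpace_fin,
      ENNReal.ofReal_pow hR0.le, hvBdef, hrdef, ← ENNReal.rpow_natCast]
  -- the λ parameter
  set lam : ℝ≥0∞ := r ^ (-(2*(n:ℝ))) with hlamdef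
  have hlam0 : lam ≠ 0 := (ENNReal.rpow_pos (pos_iff_ne_zero.mpr hr0) hrt).ne'
  have hlamt : lam ≠ ⊤ := by
    rw [hlamdef]
    refine ne_top_of_le_ne_top ENNReal.one_ne_top ?_
    calc r ^ (-(2*(n:ℝ))) ≤ r ^ (0:ℝ) :=
          ENNReal.rpow_le_rpow_of_exponent_le hr1 (neg_nonpos.mpr (by positivity))
      _ = 1 := ENNReal.rpow_zero
  set Cc : Fin ℓ → ℝ≥0∞ := fun i => ENNReal.ofReal ((3*R) ^ e i) with hCcdef
  set Λ1 : Fin ℓ → ℝ≥0∞ := fun i => lam ^ (1/p i - 1) with hΛ1def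
  set Λ2 : Fin ℓ → ℝ≥0∞ := fun i => lam ^ (1/p i) with hΛ2def
  -- pointwise master bound
  have hmaster : ∀ x ∈ B2, ∀ y ∈ B1, ENNReal.ofReal |u x - u y| ≤
      ∑ i : Fin ℓ, (Cc i * Λ1 i * F x y + Cc i * Λ2 i) := by
    intro x hx y hy
    obtain ⟨j, hj⟩ := Finite.exists_min
      (fun i => |u x - u y| ^ p i / ‖x - y‖ ^ ((n : ℝ) + s i * p i))
    have hFj : F x y = ENNReal.ofReal (|u x - u y| ^ p j / ‖x - y‖ ^ ((n : ℝ) + s j * p j)) :=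
      le_antisymm (iInf_le _ j) (le_iInf fun i => ENNReal.ofReal_le_ofReal (hj i))
    have hdiv0 : (0:ℝ) ≤ |u x - u y| ^ p j / ‖x - y‖ ^ ((n : ℝ) + s j * p j) :=
      div_nonneg (Real.rpow_nonneg (abs_nonneg _) _) (Real.rpow_nonneg (norm_nonneg _) _)
    have hreal : |u x - u y| ≤
        (|u x - u y| ^ p j / ‖x - y‖ ^ ((n : ℝ) + s j * p j)) ^ (1 / p j) * (3*R) ^ e j := by
      rcases eq_or_ne x y with rfl | hxy
      · simp only [sub_self, abs_zero, norm_zero]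
        exact mul_nonneg
          (Real.rpow_nonneg (div_nonneg (Real.rpow_nonneg le_rfl _) (Real.rpow_nonneg le_rfl _)) _)
          (Real.rpow_nonneg (by linarith) _)
      · have ht0 : 0 < ‖x - y‖ := norm_sub_pos_iff.mpr hxy
        have h1 : ‖x‖ < 2*R := mem_ball_zero_iff.mp hx
        have h2 : ‖y‖ < R := mem_ball_zero_iff.mp hy
        have ht3R : ‖x - y‖ ≤ 3 * R := by
          calc ‖x - y‖ ≤ ‖x‖ + ‖y‖ := norm_sub_le x y
            _ ≤ 3 * R := by linarith
        have hd0 : (0:ℝ) ≤ |u x - u y| := abs_nonneg _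
        have hpj : p j ≠ 0 := (hp0 j).ne'
        have hcomp : (|u x - u y| ^ p j / ‖x - y‖ ^ ((n : ℝ) + s j * p j)) ^ (1 / p j)
            = |u x - u y| / ‖x - y‖ ^ (e j) := by
          rw [Real.div_rpow (by positivity) (by positivity),
            ← Real.rpow_mul hd0, ← Real.rpow_mul ht0.le]
          have hx1 : p j * (1 / p j) = 1 := by field_simp
          have hx2 : ((n:ℝ) + s j * p j) * (1 / p j) = e j := by
            simp only [hedef]
            field_simp
          rw [hx1, hx2, Real.rpow_one]
        rw [hcomp, div_mul_eq_mul_div, le_div_iff₀ (Real.rpow_pos_of_pos ht0 _)]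
        have hrp : ‖x - y‖ ^ (e j) ≤ (3*R) ^ (e j) :=
          Real.rpow_le_rpow ht0.le ht3R (he_pos j)
        exact mul_le_mul_of_nonneg_left hrp hd0
    have hstep1 : ENNReal.ofReal |u x - u y| ≤ (F x y) ^ (1 / p j) * Cc j := by
      calc ENNReal.ofReal |u x - u y|
          ≤ ENNReal.ofReal ((|u x - u y| ^ p j / ‖x - y‖ ^ ((n : ℝ) + s j * p j)) ^ (1 / p j)
              * (3*R) ^ e j) := ENNReal.ofReal_le_ofReal hreal
        _ = (F x y) ^ (1 / p j) * Cc j := by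
            rw [hFj]
            simp only [hCcdef]
            rw [ENNReal.ofReal_mul (Real.rpow_nonneg hdiv0 _),
              ← ENNReal.ofReal_rpow_of_nonneg hdiv0 (one_div_nonneg.mpr (hp0 j).le)]
    have hstep2 : (F x y) ^ (1 / p j) * Cc j ≤ Cc j * Λ1 j * F x y + Cc j * Λ2 j := by
      have h := aux_rpow_le (F x y) lam hlam0 hlamt (hp j)
      calc (F x y) ^ (1 / p j) * Cc j ≤ (Λ1 j * F x y + Λ2 j) * Cc j := by
            simp only [hΛ1def, hΛ2def]; exact mul_le_mul_left h _
        _ = Cc j * Λ1 j * F x y + Cc j * Λ2 j := by ring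
    refine le_trans (hstep1.trans hstep2) ?_
    exact Finset.single_le_sum (f := fun i : Fin ℓ => Cc i * Λ1 i * F x y + Cc i * Λ2 i)
      (fun i _ => zero_le) (Finset.mem_univ j)
  -- integrate the master bound
  set Lx : EuclideanSpace ℝ (Fin n) → ℝ≥0∞ :=
    fun x => ∫⁻ y in B1, ENNReal.ofReal |u x - u y| with hLxdef
  have hLxmeas : Measurable Lx := Measurable.lintegral_prod_right hDmeas
  set L := ∫⁻ x in B2, Lx x with hLdef
  set G : EuclideanSpace ℝ (Fin n) → ℝ≥0∞ := fun x => ∫⁻ y in B1, F x y with hGdef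
  have hGmeas : Measurable G := Measurable.lintegral_prod_right hFmeas
  set IF2 := ∫⁻ x in B2, G x with hIF2def
  have hIF2I : IF2 ≤ I := by
    rw [hIF2def, hIF]
    calc ∫⁻ x in B2, G x ≤ ∫⁻ x in B2, ∫⁻ y, F x y := by
          refine lintegral_mono fun x => ?_
          exact setLIntegral_le_lintegral _ _
      _ ≤ ∫⁻ x, ∫⁻ y, F x y := setLIntegral_le_lintegral _ _
  have hinner_meas : ∀ i : Fin ℓ, Measurable fun q : EuclideanSpace ℝ (Fin n) × _ =>
      Cc i * Λ1 i * F q.1 q.2 + Cc i * Λ2 i :=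
    fun i => ((hFmeas.const_mul _).add_const _)
  have hinner : ∀ x ∈ B2, Lx x ≤ ∑ i : Fin ℓ, (Cc i * Λ1 i * G x + Cc i * Λ2 i * μ1) := by
    intro x hx
    have hmeassum : Measurable fun y => ∑ i : Fin ℓ, (Cc i * Λ1 i * F x y + Cc i * Λ2 i) := by
      refine Finset.measurable_sum _ fun i _ => ?_
      exact ((hFx x).const_mul _).add_const _
    calc Lx x ≤ ∫⁻ y in B1, ∑ i : Fin ℓ, (Cc i * Λ1 i * F x y + Cc i * Λ2 i) := by
          refine setLIntegral_mono_ae hmeassum.aemeasurable ?_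
          exact ae_of_all _ fun y hy => hmaster x hx y hy
      _ = ∑ i : Fin ℓ, (Cc i * Λ1 i * G x + Cc i * Λ2 i * μ1) := by
          rw [lintegral_finset_sum _ (fun i _ => ((hFx x).const_mul _).add_const _)]
          refine Finset.sum_congr rfl fun i _ => ?_
          rw [lintegral_add_right _ measurable_const, lintegral_const_mul _ (hFx x),
            setLIntegral_const, hGdef]
  have hLbound : L ≤ ∑ i : Fin ℓ, Cc i * (Λ1 i * I + Λ2 i * (μ2 * μ1)) := by
    have hmeassum2 : Measurable fun x => ∑ i : Fin ℓ, (Cc i * Λ1 i * G x + Cc i * Λ2 i * μ1) := by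
      refine Finset.measurable_sum _ fun i _ => ?_
      exact (hGmeas.const_mul _).add_const _
    calc L ≤ ∫⁻ x in B2, ∑ i : Fin ℓ, (Cc i * Λ1 i * G x + Cc i * Λ2 i * μ1) := by
          rw [hLdef]
          refine setLIntegral_mono_ae hmeassum2.aemeasurable ?_
          exact ae_of_all _ fun x hx => hinner x hx
      _ = ∑ i : Fin ℓ, (Cc i * Λ1 i * IF2 + Cc i * Λ2 i * μ1 * μ2) := by
          rw [lintegral_finset_sum _ (fun i _ => (hGmeas.const_mul _).add_const _)]
          refine Finset.sum_congr rfl fun i _ => ?_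
          rw [lintegral_add_right _ measurable_const, lintegral_const_mul _ hGmeas,
            setLIntegral_const, hIF2def]
      _ ≤ ∑ i : Fin ℓ, (Cc i * Λ1 i * I + Cc i * Λ2 i * μ1 * μ2) := by
          refine Finset.sum_le_sum fun i _ => ?_
          exact add_le_add_left (mul_le_mul_right hIF2I _) _
      _ = ∑ i : Fin ℓ, Cc i * (Λ1 i * I + Λ2 i * (μ2 * μ1)) := by
          refine Finset.sum_congr rfl fun i _ => ?_
          ring
  -- assemble the main ENNReal estimate
  have hmainE : r ^ α * L ≤ K * (μ2 * μ1) := by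
    calc r ^ α * L ≤ r ^ α * ∑ i : Fin ℓ, Cc i * (Λ1 i * I + Λ2 i * (μ2 * μ1)) :=
          mul_le_mul_right hLbound _
      _ = ∑ i : Fin ℓ, r ^ α * (Cc i * (Λ1 i * I + Λ2 i * (μ2 * μ1))) := Finset.mul_sum _ _ _
      _ ≤ ∑ i : Fin ℓ, ENNReal.ofReal (3 ^ e i) * (vB⁻¹ * (vB⁻¹ * I) + 1) * (μ2 * μ1) := by
          refine Finset.sum_le_sum fun i _ => ?_
          have hdiv : (n:ℝ)/p i = (n:ℝ) * (1/p i) := div_eq_mul_one_div _ _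
          have hαi := hα_le i
          rw [hdiv] at hαi
          refine aux_per_i r vB I μ1 μ2 hr1 hrt hvB0 hvBt R hR hrdef
            (n:ℝ) α (e i) (p i) (he_pos i) hμ1v hμ12 ?_ ?_
          · simp only [hedef]; nlinarith [hαi]
          · simp only [hedef]; nlinarith [hαi]
      _ = K * (μ2 * μ1) := by rw [hKdef, Finset.sum_mul]
  -- step A : relate the average to L
  have habs_meas : ∀ x : EuclideanSpace ℝ (Fin n),
      Measurable fun y => |u x - u y| := fun x => (measurable_const.sub hu).abs
  have hinner_avg : ∀ x : EuclideanSpace ℝ (Fin n),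
      (⨍ y in B1, |u x - u y|) = (μ1.toReal)⁻¹ * (Lx x).toReal := by
    intro x
    rw [setAverage_eq, smul_eq_mul,
      integral_eq_lintegral_of_nonneg_ae (ae_of_all _ fun y => abs_nonneg (u x - u y))
        (habs_meas x).aestronglyMeasurable]
    rfl
  have hg_meas : Measurable fun x => (μ1.toReal)⁻¹ * (Lx x).toReal :=
    (hLxmeas.ennreal_toReal).const_mul _
  have hA : (⨍ x in B2, ⨍ y in B1, |u x - u y|)
      = (μ2.toReal)⁻¹ * (∫⁻ x in B2, ENNReal.ofReal ((μ1.toReal)⁻¹ * (Lx x).toReal)).toReal := by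
    rw [setAverage_eq, smul_eq_mul]
    congr 1
    rw [show (fun x => ⨍ y in B1, |u x - u y|) = fun x => (μ1.toReal)⁻¹ * (Lx x).toReal from
      funext hinner_avg]
    exact integral_eq_lintegral_of_nonneg_ae
      (ae_of_all _ fun x => mul_nonneg (inv_nonneg.mpr ENNReal.toReal_nonneg)
        ENNReal.toReal_nonneg) hg_meas.aestronglyMeasurable
  have hμ1inv : ENNReal.ofReal ((μ1.toReal)⁻¹) = μ1⁻¹ := by
    rw [ENNReal.ofReal_inv_of_pos (ENNReal.toReal_pos hμ10 hμ1t), ENNReal.ofReal_toReal hμ1t]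
  have hμ2inv : ENNReal.ofReal ((μ2.toReal)⁻¹) = μ2⁻¹ := by
    rw [ENNReal.ofReal_inv_of_pos (ENNReal.toReal_pos hμ20 hμ2t), ENNReal.ofReal_toReal hμ2t]
  have hGle : (∫⁻ x in B2, ENNReal.ofReal ((μ1.toReal)⁻¹ * (Lx x).toReal)) ≤ μ1⁻¹ * L := by
    calc (∫⁻ x in B2, ENNReal.ofReal ((μ1.toReal)⁻¹ * (Lx x).toReal))
        ≤ ∫⁻ x in B2, μ1⁻¹ * Lx x := by
          refine lintegral_mono fun x => ?_
          rw [ENNReal.ofReal_mul (by positivity), hμ1inv]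
          exact mul_le_mul_right ENNReal.ofReal_toReal_le _
      _ = μ1⁻¹ * L := by rw [lintegral_const_mul _ hLxmeas, hLdef]
  have hofA : ENNReal.ofReal (R ^ α * (⨍ x in B2, ⨍ y in B1, |u x - u y|))
      ≤ r ^ α * (μ2⁻¹ * (μ1⁻¹ * L)) := by
    rw [ENNReal.ofReal_mul (Real.rpow_nonneg hR0.le _), hA,
      ENNReal.ofReal_mul (inv_nonneg.mpr ENNReal.toReal_nonneg), hμ2inv, hrdef,
      ENNReal.ofReal_rpow_of_pos hR0]
    refine mul_le_mul_right ?_ _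
    refine mul_le_mul_right ?_ _
    exact le_trans ENNReal.ofReal_toReal_le hGle
  have hlast : r ^ α * (μ2⁻¹ * (μ1⁻¹ * L)) ≤ K := by
    have h1 : r ^ α * (μ2⁻¹ * (μ1⁻¹ * L)) = μ2⁻¹ * μ1⁻¹ * (r ^ α * L) := by ring
    rw [h1]
    calc μ2⁻¹ * μ1⁻¹ * (r ^ α * L) ≤ μ2⁻¹ * μ1⁻¹ * (K * (μ2 * μ1)) :=
          mul_le_mul_right hmainE _
      _ = K * (μ2⁻¹ * μ2) * (μ1⁻¹ * μ1) := by ring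
      _ = K := by
          rw [ENNReal.inv_mul_cancel hμ20 hμ2t, ENNReal.inv_mul_cancel hμ10 hμ1t,
            mul_one, mul_one]
  exact (ENNReal.ofReal_le_iff_le_toReal hKt).mp (hofA.trans hlast)
end

section
/- Define for x, y in a set and t ∈ ℝ the inf-convolution Φ_{x,y}(t) = inf{ Σ_{i=1}^ℓ |t_i|^{p_i} / d(x,y)^{s_i p_i} : t₁ + ⋯ + t_ℓ = t }. If p₁,…,p_ℓ ≥ 1, then Φ_{x,y} is convex on ℝ and satisfies min_{1≤i≤ℓ} |t|^{p_i}/(ℓ^{p_i} d(x,y)^{s_i p_i}) ≤ Φ_{x,y}(t) ≤ min_{1≤i≤ℓ} |t|^{p_i}/d(x,y)^{s_i p_i} for all t ∈ ℝ. -/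
/-!
Φ is the infimal convolution of the convex costs `w ↦ |w| ^ pᵢ / d ^ (sᵢ pᵢ)` over the
hyperplane `∑ wᵢ = t`; averaging two near-optimal decompositions coordinatewise shows it is convex.
Loading all of `t` on one coordinate `i` gives the upper bound. Conversely, in any decomposition
some coordinate carries at least `|t| / ℓ`, and its cost alone gives the lower bound.
-/

open Finset Set

theorem convexOn_abs_rpow {p : ℝ} (hp : 1 ≤ p) : ConvexOn ℝ univ fun x : ℝ => |x| ^ p := by
  have habs : ConvexOn ℝ univ fun x : ℝ => |x| := convexOn_univ_norm (E := ℝ)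
  have himage : (fun x : ℝ => |x|) '' univ = Set.Ici 0 := by
    ext y
    constructor
    · rintro ⟨x, -, rfl⟩
      exact abs_nonneg x
    · exact fun hy => ⟨y, trivial, abs_of_nonneg hy⟩
  refine ConvexOn.comp (g := fun x : ℝ => x ^ p) ?_ habs ?_
  · rw [himage]
    exact convexOn_rpow hp
  · rw [himage]
    exact Real.monotoneOn_rpow_Ici_of_exponent_nonneg (zero_le_one.trans hp)

theorem exists_abs_sum_div_card_le {ι : Type*} [Fintype ι] [Nonempty ι] (w : ι → ℝ) :
    ∃ j, |∑ i, w i| / Fintype.card ι ≤ |w j| := by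
  have hcard : (0 : ℝ) < Fintype.card ι := Nat.cast_pos.2 Fintype.card_pos
  have hsum : ∑ _i : ι, |∑ i, w i| / Fintype.card ι ≤ ∑ i, |w i| := by
    rw [sum_const, card_univ, nsmul_eq_mul, mul_div_cancel₀ _ hcard.ne']
    exact abs_sum_le_sum_abs _ _
  obtain ⟨j, -, hj⟩ := exists_le_of_sum_le univ_nonempty hsum
  exact ⟨j, hj⟩

noncomputable def infConv {ι : Type*} [Fintype ι] (f : ι → ℝ → ℝ) (t : ℝ) : ℝ :=
  sInf {v : ℝ | ∃ w : ι → ℝ, (∑ i, w i) = t ∧ v = ∑ i, f i (w i)}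

namespace infConv

variable {ι : Type*} [Fintype ι] {f : ι → ℝ → ℝ}

theorem le_sum (hf : ∀ i x, 0 ≤ f i x) (w : ι → ℝ) :
    infConv f (∑ i, w i) ≤ ∑ i, f i (w i) :=
  csInf_le ⟨0, by rintro _ ⟨w, -, rfl⟩; exact sum_nonneg fun i _ => hf i (w i)⟩ ⟨w, rfl, rfl⟩

theorem nonempty [Nonempty ι] (t : ℝ) :
    {v : ℝ | ∃ w : ι → ℝ, (∑ i, w i) = t ∧ v = ∑ i, f i (w i)}.Nonempty := by
  classical
  obtain ⟨i⟩ := ‹Nonempty ι›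
  exact ⟨_, Pi.single i t, by simp, rfl⟩

theorem le_of_forall_sum_eq [Nonempty ι] {c t : ℝ}
    (h : ∀ w : ι → ℝ, ∑ i, w i = t → c ≤ ∑ i, f i (w i)) : c ≤ infConv f t :=
  le_csInf (nonempty t) fun _ ⟨w, hw, hv⟩ => hv ▸ h w hw

theorem exists_sum_lt_add [Nonempty ι] (t : ℝ) {ε : ℝ} (hε : 0 < ε) :
    ∃ w : ι → ℝ, ∑ i, w i = t ∧ ∑ i, f i (w i) < infConv f t + ε := by
  obtain ⟨_, ⟨w, hw, rfl⟩, hlt⟩ :=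
    exists_lt_of_csInf_lt (nonempty (f := f) t) (lt_add_of_pos_right _ hε)
  exact ⟨w, hw, hlt⟩

theorem le_apply (hf : ∀ i x, 0 ≤ f i x) (hf0 : ∀ i, f i 0 = 0) (i : ι) (t : ℝ) :
    infConv f t ≤ f i t := by
  classical
  simpa [Pi.apply_single f hf0, sum_pi_single'] using le_sum hf (Pi.single i t)

theorem convexOn [Nonempty ι] (hf : ∀ i x, 0 ≤ f i x) (hconv : ∀ i, ConvexOn ℝ univ (f i)) :
    ConvexOn ℝ univ (infConv f) := by
  refine ⟨convex_univ, fun x _ y _ a b ha hb hab => le_of_forall_pos_le_add fun ε hε => ?_⟩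
  obtain ⟨v, rfl, hv⟩ := exists_sum_lt_add (f := f) x hε
  obtain ⟨u, rfl, hu⟩ := exists_sum_lt_add (f := f) y hε
  have hsum : a • ∑ i, v i + b • ∑ i, u i = ∑ i, (a • v i + b • u i) := by
    simp only [smul_eq_mul, mul_sum, sum_add_distrib]
  calc infConv f (a • ∑ i, v i + b • ∑ i, u i)
      ≤ ∑ i, f i (a • v i + b • u i) := hsum ▸ le_sum hf _
    _ ≤ ∑ i, (a • f i (v i) + b • f i (u i)) :=
        sum_le_sum fun i _ => (hconv i).2 trivial trivial ha hb hab
    _ = a * ∑ i, f i (v i) + b * ∑ i, f i (u i) := by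
        simp only [smul_eq_mul, mul_sum, sum_add_distrib]
    _ ≤ a * (infConv f (∑ i, v i) + ε) + b * (infConv f (∑ i, u i) + ε) := by
        gcongr
    _ = a • infConv f (∑ i, v i) + b • infConv f (∑ i, u i) + ε := by
        simp only [smul_eq_mul]
        linear_combination ε * hab

end infConv

theorem convexOn_abs_rpow_div {q a : ℝ} (hq : 1 ≤ q) (ha : 0 ≤ a) :
    ConvexOn ℝ univ fun x : ℝ => |x| ^ q / a := by
  simpa only [smul_eq_mul, div_eq_inv_mul] using (convexOn_abs_rpow hq).smul (inv_nonneg.2 ha)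

section PowerCosts

variable {ι : Type*} {p c : ι → ℝ}

theorem abs_rpow_div_nonneg (hc : ∀ i, 0 ≤ c i) (i : ι) (x : ℝ) :
    0 ≤ |x| ^ p i / c i :=
  div_nonneg (Real.rpow_nonneg (abs_nonneg x) _) (hc i)

theorem iInf_le_infConv_abs_rpow_div [Fintype ι] [Nonempty ι] (hp : ∀ i, 0 ≤ p i)
    (hc : ∀ i, 0 ≤ c i) (t : ℝ) :
    ⨅ i, |t| ^ p i / ((Fintype.card ι : ℝ) ^ p i * c i) ≤
      infConv (fun i x => |x| ^ p i / c i) t := by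
  refine infConv.le_of_forall_sum_eq fun w hw => ?_
  obtain ⟨j, hj⟩ := exists_abs_sum_div_card_le w
  rw [hw] at hj
  have hcard : (0 : ℝ) ≤ Fintype.card ι := Nat.cast_nonneg _
  calc ⨅ i, |t| ^ p i / ((Fintype.card ι : ℝ) ^ p i * c i)
      ≤ |t| ^ p j / ((Fintype.card ι : ℝ) ^ p j * c j) := ciInf_le (finite_range _).bddBelow j
    _ = (|t| / Fintype.card ι) ^ p j / c j := by
        rw [Real.div_rpow (abs_nonneg t) hcard, div_div]
    _ ≤ |w j| ^ p j / c j := by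
        gcongr
        · exact hc j
        · exact hp j
    _ ≤ ∑ i, |w i| ^ p i / c i :=
        single_le_sum (fun i _ => abs_rpow_div_nonneg hc i (w i)) (mem_univ j)

end PowerCosts

theorem stmt_18_general (ℓ : ℕ) (hℓ : 1 ≤ ℓ)
    (s p : Fin ℓ → ℝ) (hp : ∀ i, 1 ≤ p i)
    (d : ℝ) (hd : 0 < d)
    (Φ : ℝ → ℝ)
    (hΦ : ∀ t, Φ t = sInf { v : ℝ | ∃ w : Fin ℓ → ℝ,
        (∑ i, w i) = t ∧ v = ∑ i, |w i| ^ p i / d ^ (s i * p i) }) :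
    ConvexOn ℝ Set.univ Φ ∧
    ∀ t : ℝ,
      (⨅ i, |t| ^ p i / ((ℓ : ℝ) ^ p i * d ^ (s i * p i))) ≤ Φ t ∧
      Φ t ≤ ⨅ i, |t| ^ p i / d ^ (s i * p i) := by
  have : Nonempty (Fin ℓ) := ⟨⟨0, hℓ⟩⟩
  set c : Fin ℓ → ℝ := fun i => d ^ (s i * p i)
  have hc : ∀ i, 0 ≤ c i := fun i => Real.rpow_nonneg hd.le _
  have hf := abs_rpow_div_nonneg (p := p) hc
  obtain rfl : Φ = infConv fun i x => |x| ^ p i / c i := funext hΦ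
  have hzero : ∀ i, |(0 : ℝ)| ^ p i / c i = 0 := fun i => by
    rw [abs_zero, Real.zero_rpow (zero_lt_one.trans_le (hp i)).ne', zero_div]
  refine ⟨infConv.convexOn hf fun i => convexOn_abs_rpow_div (hp i) (hc i),
    fun t => ⟨?_, le_ciInf fun i => infConv.le_apply hf hzero i t⟩⟩
  simpa only [Fintype.card_fin] using
    iInf_le_infConv_abs_rpow_div (fun i => zero_le_one.trans (hp i)) hc t

theorem stmt_18 (ℓ : ℕ) (hℓ : 1 ≤ ℓ)
    (s p : Fin ℓ → ℝ) (hs : ∀ i, s i ∈ Set.Ioo (0:ℝ) 1) (hp : ∀ i, 1 ≤ p i)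
    (d : ℝ) (hd : 0 < d)
    (Φ : ℝ → ℝ)
    (hΦ : ∀ t, Φ t = sInf { v : ℝ | ∃ w : Fin ℓ → ℝ,
        (∑ i, w i) = t ∧ v = ∑ i, |w i| ^ p i / d ^ (s i * p i) }) :
    ConvexOn ℝ Set.univ Φ ∧
    ∀ t : ℝ,
      (⨅ i, |t| ^ p i / ((ℓ : ℝ) ^ p i * d ^ (s i * p i))) ≤ Φ t ∧
      Φ t ≤ ⨅ i, |t| ^ p i / d ^ (s i * p i) :=
  stmt_18_general ℓ hℓ s p hp d hd Φ hΦ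
end
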